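/- arXiv:1904.02550 — 6 statements merged into one kernel-verified Lean document; each statement's English description precedes it below -/
import Mathlib

section
/- For any prime p > 3, the sum over k from 0 to p-1 of k times (1/(p+1))_k^{p+1} / (k!)^{p+1} is congruent to p^3/4 modulo p^4, where (x)_k denotes the Pochhammer symbol x(x+1)···(x+k-1). -/
/-!
Write `(1/(p+1))_k / k! = ∏_{i<k} (1 + x_i)` with `x_i = -p/((p+1)(i+1))`, of norm `1/p`.
Since `p ∣ C(p+1, 3)`, the binomial theorem gives
`(1 + x_i)^(p+1) ≡ 1 - p/(i+1) + p³/(2(p+1)(i+1)²) mod p⁴`, and multiplying these out, the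
`k`-th summand is `k ((-1)^k C(p-1, k) + p³/(2(p+1)) S_k) mod p⁴`, where
`S_k = ∑_{i<k} 1/(i+1)²`. The binomial parts cancel, as `∑_k (-1)^k k C(p-1, k) = 0`.
Exchanging the two sums turns `∑_k k S_k` into `(p(p-1) S_{p-1} - (p-1) + H_{p-1}) / 2`, so
`∑_k k S_k ≡ (p+1)/2 mod p` comes down to `H_{p-1} ≡ 0 mod p`, which follows by pairing `1/j`
with `1/(p-j)`.
-/

/-- The Pochhammer symbol `(x)_k = x(x+1)⋯(x+k-1)` for rational `x`. -/
def pochQ (x : ℚ) (k : ℕ) : ℚ := ∏ j ∈ Finset.range k, (x + j)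

open Finset

lemma norm_prod_le_one {R ι : Type*} [NormedCommRing R] [NormOneClass R] {s : Finset ι}
    {f : ι → R} (h : ∀ i ∈ s, ‖f i‖ ≤ 1) : ‖∏ i ∈ s, f i‖ ≤ 1 :=
  (Finset.norm_prod_le s f).trans (prod_le_one (fun _ _ => norm_nonneg _) h)

namespace IsUltrametricDist

section AddGroup

variable {E : Type*} [SeminormedAddCommGroup E] [IsUltrametricDist E]

lemma norm_sub_le_max_norm_sub (a b c : E) : ‖a - c‖ ≤ max ‖a - b‖ ‖b - c‖ := by
  simpa using norm_add_le_max (a - b) (b - c)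

lemma norm_le_of_norm_sub_le {a b : E} {c : ℝ} (hab : ‖a - b‖ ≤ c) (hb : ‖b‖ ≤ c) :
    ‖a‖ ≤ c := by
  simpa using (norm_add_le_max (a - b) b).trans (max_le hab hb)

end AddGroup

variable {R ι : Type*} [NormedCommRing R] [NormOneClass R] [IsUltrametricDist R]

lemma norm_prod_sub_prod_le {s : Finset ι} {a b : ι → R} {ε : ℝ} (hε : 0 ≤ ε)
    (ha : ∀ i ∈ s, ‖a i‖ ≤ 1) (hb : ∀ i ∈ s, ‖b i‖ ≤ 1)
    (hab : ∀ i ∈ s, ‖a i - b i‖ ≤ ε) :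
    ‖∏ i ∈ s, a i - ∏ i ∈ s, b i‖ ≤ ε := by
  induction s using Finset.cons_induction with
  | empty => simpa using hε
  | cons j s hj ih =>
    simp only [mem_cons, forall_eq_or_imp] at ha hb hab
    rw [prod_cons, prod_cons,
      show a j * ∏ i ∈ s, a i - b j * ∏ i ∈ s, b i
        = (a j - b j) * ∏ i ∈ s, a i + b j * (∏ i ∈ s, a i - ∏ i ∈ s, b i) by ring]
    refine (norm_add_le_max _ _).trans (max_le ?_ ?_)
    · simpa using norm_mul_le_of_le hab.1 (norm_prod_le_one ha.2)
    · simpa using norm_mul_le_of_le hb.1 (ih ha.2 hb.2 hab.2)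

lemma norm_prod_add_sub_prod_add_sum_le {s : Finset ι} {y z : ι → R} {r δ : ℝ}
    (hr : r ≤ 1) (hδ : 0 ≤ δ) (hδr : δ ≤ r)
    (hy : ∀ i ∈ s, ‖y i - 1‖ ≤ r) (hz : ∀ i ∈ s, ‖z i‖ ≤ δ) :
    ‖∏ i ∈ s, (y i + z i) - (∏ i ∈ s, y i + ∑ i ∈ s, z i)‖ ≤ r * δ := by
  induction s using Finset.cons_induction with
  | empty => simpa using mul_nonneg (hδ.trans hδr) hδ
  | cons j s hj ih =>
    simp only [mem_cons, forall_eq_or_imp] at hy hz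
    have hyj : ‖y j‖ ≤ 1 := norm_le_of_norm_sub_le (hy.1.trans hr) norm_one.le
    have hY : ‖∏ i ∈ s, y i - 1‖ ≤ r := by
      simpa using norm_prod_sub_prod_le (b := 1) ((norm_nonneg _).trans (hy.1))
        (fun i hi => norm_le_of_norm_sub_le ((hy.2 i hi).trans hr) norm_one.le)
        (fun _ _ => norm_one.le) hy.2
    have hZ : ‖∑ i ∈ s, z i‖ ≤ δ := norm_sum_le_of_forall_le_of_nonneg hδ hz.2
    set P := ∏ i ∈ s, (y i + z i)
    set Y := ∏ i ∈ s, y i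
    set Z := ∑ i ∈ s, z i
    rw [prod_cons, prod_cons, sum_cons,
      show (y j + z j) * P - (y j * Y + (z j + Z))
        = (y j + z j) * (P - (Y + Z)) + z j * (Y - 1) + (y j - 1) * Z + z j * Z by ring]
    refine (norm_add_le_max _ _).trans (max_le ((norm_add_le_max _ _).trans (max_le
      ((norm_add_le_max _ _).trans (max_le ?_ ?_)) ?_)) ?_)
    · have hyz : ‖y j + z j‖ ≤ 1 :=
        (norm_add_le_max _ _).trans (max_le hyj (hz.1.trans (hδr.trans hr)))
      simpa using norm_mul_le_of_le hyz (ih hy.2 hz.2)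
    · simpa [mul_comm] using norm_mul_le_of_le hz.1 hY
    · exact norm_mul_le_of_le hy.1 hZ
    · exact (norm_mul_le_of_le hz.1 hZ).trans (mul_le_mul_of_nonneg_right hδr hδ)

end IsUltrametricDist

section Identities

variable {K : Type*} [Field K] [CharZero K]

lemma prod_range_one_sub_div_eq_neg_one_pow_mul_choose {n k : ℕ} (hk : k ≤ n) :
    ∏ i ∈ range k, (1 - ((n : K) + 1) / ((i : K) + 1)) = (-1) ^ k * n.choose k := by
  induction k with
  | zero => simp
  | succ k ih =>
    have h : (n.choose (k + 1) : K) * (k + 1) = n.choose k * (n - k) := by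
      have := congrArg (Nat.cast : ℕ → K) (Nat.choose_succ_right_eq n k)
      push_cast [Nat.cast_sub (show k ≤ n by omega)] at this
      exact this
    rw [prod_range_succ, ih (by omega)]
    field_simp
    linear_combination (-1) ^ k * h

lemma sum_range_mul_neg_one_pow_mul_choose {n : ℕ} (hn : 2 ≤ n) :
    ∑ k ∈ range (n + 1), (k : ℤ) * (-1) ^ k * n.choose k = 0 := by
  obtain ⟨m, rfl⟩ : ∃ m, n = m + 1 := ⟨n - 1, by omega⟩
  have hterm : ∀ k ∈ range (m + 1),
      ((k + 1 : ℕ) : ℤ) * (-1) ^ (k + 1) * (m + 1).choose (k + 1)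
        = -(m + 1) * ((-1) ^ k * m.choose k) := by
    intro k _
    have := congrArg (Nat.cast : ℕ → ℤ) (Nat.add_one_mul_choose_eq m k)
    push_cast at this ⊢
    linear_combination (-1 : ℤ) ^ k * this
  rw [sum_range_succ', sum_congr rfl hterm, ← mul_sum,
    Int.alternating_sum_range_choose_of_ne (by omega)]
  simp

lemma sum_range_mul_prod_one_sub_div_eq_zero {n : ℕ} (hn : 3 ≤ n) :
    ∑ k ∈ range n, (k : K) * ∏ i ∈ range k, (1 - (n : K) / ((i : K) + 1)) = 0 := by
  obtain ⟨m, rfl⟩ : ∃ m, n = m + 1 := ⟨n - 1, by omega⟩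
  rw [sum_congr rfl fun k hk => by
    rw [Nat.cast_succ, prod_range_one_sub_div_eq_neg_one_pow_mul_choose
      (Nat.lt_succ_iff.mp (mem_range.mp hk)), ← mul_assoc]]
  exact_mod_cast sum_range_mul_neg_one_pow_mul_choose (by omega : 2 ≤ m)

lemma sum_range_mul_sum_one_div_succ_sq (n : ℕ) :
    ∑ k ∈ range (n + 1), (k : K) * ∑ i ∈ range k, 1 / ((i : K) + 1) ^ 2
      = ((n + 1) * n * ∑ i ∈ range n, 1 / ((i : K) + 1) ^ 2 - n
          + ∑ i ∈ range n, 1 / ((i : K) + 1)) / 2 := by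
  induction n with
  | zero => simp
  | succ n ih =>
    rw [sum_range_succ, ih, sum_range_succ, sum_range_succ]
    push_cast
    field_simp
    ring

lemma two_mul_sum_range_one_div_succ (n : ℕ) :
    2 * ∑ i ∈ range n, 1 / ((i : K) + 1)
      = (n + 1) * ∑ i ∈ range n, 1 / (((i : K) + 1) * ((n - i : ℕ) : K)) := by
  have hrefl :
      ∑ i ∈ range n, 1 / ((i : K) + 1) = ∑ i ∈ range n, 1 / ((n - i : ℕ) : K) := by
    rw [← sum_range_reflect]
    refine sum_congr rfl fun i hi => ?_
    rw [← Nat.cast_add_one, show n - 1 - i + 1 = n - i by have := mem_range.mp hi; omega]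
  rw [two_mul]
  nth_rw 2 [hrefl]
  rw [← sum_add_distrib, mul_sum]
  refine sum_congr rfl fun i hi => ?_
  have hi : i < n := mem_range.mp hi
  have : (n : K) - i ≠ 0 := sub_ne_zero.mpr (by exact_mod_cast hi.ne')
  rw [Nat.cast_sub hi.le]
  field_simp
  ring

end Identities

namespace Padic

open IsUltrametricDist

variable {p : ℕ} [hp : Fact p.Prime]

lemma inv_p_le_one : (p : ℝ)⁻¹ ≤ 1 := inv_le_one_of_one_le₀ (by exact_mod_cast hp.out.one_le)

lemma norm_natCast_eq_one_of_lt {n : ℕ} (h0 : n ≠ 0) (hn : n < p) : ‖(n : ℚ_[p])‖ = 1 :=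
  norm_natCast_eq_one_iff.mpr (Nat.coprime_of_lt_prime h0 hn hp.out)

lemma norm_natCast_add_one_eq_one {i : ℕ} (hi : i + 1 < p) : ‖(i : ℚ_[p]) + 1‖ = 1 := by
  exact_mod_cast norm_natCast_eq_one_of_lt i.succ_ne_zero hi

lemma norm_two (hp2 : 2 < p) : ‖(2 : ℚ_[p])‖ = 1 := by
  exact_mod_cast norm_natCast_eq_one_of_lt two_ne_zero hp2

lemma norm_p_add_one : ‖(p : ℚ_[p]) + 1‖ = 1 := by
  exact_mod_cast norm_natCast_eq_one_iff.mpr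
    (Nat.coprime_self_add_right.mpr (Nat.coprime_one_right p))

lemma p_add_one_ne_zero : (p : ℚ_[p]) + 1 ≠ 0 :=
  norm_ne_zero_iff.mp (by rw [norm_p_add_one]; exact one_ne_zero)

lemma norm_natCast_le_inv_of_dvd {n : ℕ} (h : p ∣ n) : ‖(n : ℚ_[p])‖ ≤ (p : ℝ)⁻¹ := by
  simpa using (norm_int_le_pow_iff_dvd (p := p) n 1).mpr
    (by simpa using Int.natCast_dvd_natCast.mpr h)

lemma dvd_choose_add_one_three (hp3 : 3 < p) : p ∣ (p + 1).choose 3 := by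
  rw [Nat.choose_succ_succ]
  exact dvd_add (hp.out.dvd_choose_self two_ne_zero (by omega))
    (hp.out.dvd_choose_self three_ne_zero hp3)

lemma norm_one_add_pow_succ_sub_le (hp3 : 3 < p) {x : ℚ_[p]} (hx : ‖x‖ ≤ (p : ℝ)⁻¹) :
    ‖(1 + x) ^ (p + 1) - (1 + (p + 1) * x + (p + 1) * p / 2 * x ^ 2)‖ ≤ (p : ℝ)⁻¹ ^ 4 := by
  have hhead : ∑ m ∈ range 3, x ^ m * ((p + 1).choose m : ℚ_[p])
      = 1 + (p + 1) * x + (p + 1) * p / 2 * x ^ 2 := by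
    simp [sum_range_succ, Nat.cast_choose_two]
    ring
  rw [add_comm, add_pow, show p + 1 + 1 = 3 + (p - 1) by omega, sum_range_add]
  simp only [one_pow, mul_one, hhead, add_sub_cancel_left]
  refine norm_sum_le_of_forall_le_of_nonneg (by positivity) fun j _ => ?_
  rw [norm_mul, norm_pow]
  have hx3 : ‖x‖ ^ (3 + j) ≤ (p : ℝ)⁻¹ ^ (3 + j) := pow_le_pow_left₀ (norm_nonneg _) hx _
  rcases j.eq_zero_or_pos with rfl | hj
  · calc ‖x‖ ^ (3 + 0) * ‖((p + 1).choose (3 + 0) : ℚ_[p])‖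
        ≤ (p : ℝ)⁻¹ ^ 3 * (p : ℝ)⁻¹ :=
          mul_le_mul hx3 (norm_natCast_le_inv_of_dvd (dvd_choose_add_one_three hp3))
            (norm_nonneg _) (by positivity)
      _ = (p : ℝ)⁻¹ ^ 4 := by ring
  · calc ‖x‖ ^ (3 + j) * ‖((p + 1).choose (3 + j) : ℚ_[p])‖ ≤ (p : ℝ)⁻¹ ^ (3 + j) * 1 :=
          mul_le_mul hx3 (norm_natCast_le_one _ _) (norm_nonneg _) (by positivity)
      _ ≤ (p : ℝ)⁻¹ ^ 4 := by
          rw [mul_one]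
          exact pow_le_pow_of_le_one (by positivity) inv_p_le_one (by omega)

lemma norm_prod_pow_sub_le (hp3 : 3 < p) {k : ℕ} (hk : k < p) :
    ‖∏ i ∈ range k, ((1 / ((p : ℚ_[p]) + 1) + i) / (i + 1)) ^ (p + 1)
      - (∏ i ∈ range k, (1 - p / ((i : ℚ_[p]) + 1))
        + p ^ 3 / (2 * (p + 1)) * ∑ i ∈ range k, 1 / ((i : ℚ_[p]) + 1) ^ 2)‖
      ≤ (p : ℝ)⁻¹ ^ 4 := by
  have hq : (p : ℚ_[p]) + 1 ≠ 0 := p_add_one_ne_zero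
  have hunit : ∀ i ∈ range k, ‖(i : ℚ_[p]) + 1‖ = 1 := fun i hi =>
    norm_natCast_add_one_eq_one (by have := mem_range.mp hi; omega)
  set y : ℕ → ℚ_[p] := fun i => 1 - p / (i + 1)
  set z : ℕ → ℚ_[p] := fun i => p ^ 3 / (2 * (p + 1)) * (1 / (i + 1) ^ 2)
  have hy : ∀ i ∈ range k, ‖y i - 1‖ ≤ (p : ℝ)⁻¹ := fun i hi => by
    simp [y, norm_div, hunit i hi]
  have hz : ∀ i ∈ range k, ‖z i‖ ≤ (p : ℝ)⁻¹ ^ 3 := fun i hi => by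
    simp [z, norm_div, norm_mul, norm_pow, norm_two (by omega : 2 < p), norm_p_add_one,
      hunit i hi]
  have hbinom : ∀ i ∈ range k,
      ‖((1 / ((p : ℚ_[p]) + 1) + i) / (i + 1)) ^ (p + 1) - (y i + z i)‖ ≤ (p : ℝ)⁻¹ ^ 4 := by
    intro i hi
    have hx : ‖-(p / ((p + 1) * ((i : ℚ_[p]) + 1)))‖ ≤ (p : ℝ)⁻¹ := by
      simp [norm_div, norm_mul, norm_p_add_one, hunit i hi]
    convert norm_one_add_pow_succ_sub_le hp3 hx using 3
    · field_simp
      ring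
    · simp only [y, z]
      field_simp
      ring
  have hyz : ∀ i ∈ range k, ‖y i + z i‖ ≤ 1 := fun i hi =>
    (norm_add_le_max _ _).trans (max_le
      (norm_le_of_norm_sub_le ((hy i hi).trans inv_p_le_one) norm_one.le)
      ((hz i hi).trans (pow_le_one₀ (by positivity) inv_p_le_one)))
  rw [mul_sum]
  refine (norm_sub_le_max_norm_sub _ (∏ i ∈ range k, (y i + z i)) _).trans (max_le ?_ ?_)
  · refine norm_prod_sub_prod_le (by positivity) (fun i hi => ?_) hyz hbinom
    exact norm_le_of_norm_sub_le
      ((hbinom i hi).trans (pow_le_one₀ (by positivity) inv_p_le_one)) (hyz i hi)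
  · refine (norm_prod_add_sub_prod_add_sum_le inv_p_le_one (by positivity)
      (pow_le_of_le_one (by positivity) inv_p_le_one (by norm_num)) hy hz).trans_eq ?_
    ring

lemma norm_sum_range_one_div_succ_le (hp2 : 2 < p) :
    ‖∑ i ∈ range (p - 1), 1 / ((i : ℚ_[p]) + 1)‖ ≤ (p : ℝ)⁻¹ := by
  have h := two_mul_sum_range_one_div_succ (K := ℚ_[p]) (p - 1)
  rw [Nat.cast_pred hp.out.pos, sub_add_cancel] at h
  have hterm : ∀ i ∈ range (p - 1),
      ‖1 / (((i : ℚ_[p]) + 1) * ((p - 1 - i : ℕ) : ℚ_[p]))‖ ≤ 1 := by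
    intro i hi
    have hi : i < p - 1 := mem_range.mp hi
    rw [norm_div, norm_mul, norm_natCast_add_one_eq_one (by omega),
      norm_natCast_eq_one_of_lt (by omega) (by omega)]
    simp
  calc ‖∑ i ∈ range (p - 1), 1 / ((i : ℚ_[p]) + 1)‖
      = ‖2 * ∑ i ∈ range (p - 1), 1 / ((i : ℚ_[p]) + 1)‖ := by
        rw [norm_mul, norm_two hp2, one_mul]
    _ ≤ (p : ℝ)⁻¹ * 1 := by
        rw [h, norm_mul, norm_p]
        gcongr
        exact norm_sum_le_of_forall_le_of_nonneg zero_le_one hterm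
    _ = (p : ℝ)⁻¹ := mul_one _

lemma norm_sum_range_one_div_succ_sq_le_one :
    ‖∑ i ∈ range (p - 1), 1 / ((i : ℚ_[p]) + 1) ^ 2‖ ≤ 1 := by
  refine norm_sum_le_of_forall_le_of_nonneg zero_le_one fun i hi => ?_
  rw [norm_div, norm_pow, norm_natCast_add_one_eq_one (by have := mem_range.mp hi; omega)]
  simp

lemma norm_sum_range_mul_sum_sub_le (hp3 : 3 < p) :
    ‖∑ k ∈ range p, (k : ℚ_[p]) * ∑ i ∈ range k, 1 / ((i : ℚ_[p]) + 1) ^ 2 - (p + 1) / 2‖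
      ≤ (p : ℝ)⁻¹ := by
  have hsum := sum_range_mul_sum_one_div_succ_sq (K := ℚ_[p]) (p - 1)
  rw [Nat.sub_add_cancel hp.out.one_le, Nat.cast_pred hp.out.pos, sub_add_cancel] at hsum
  set Q := ∑ i ∈ range (p - 1), 1 / ((i : ℚ_[p]) + 1) ^ 2
  set H := ∑ i ∈ range (p - 1), 1 / ((i : ℚ_[p]) + 1)
  rw [hsum, show (p * (p - 1) * Q - (p - 1) + H) / 2 - (p + 1) / 2
      = (p * ((p - 1) * Q - 2) + H) / 2 by ring, norm_div, norm_two (by omega), div_one]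
  refine (norm_add_le_max _ _).trans (max_le ?_ (norm_sum_range_one_div_succ_le (by omega)))
  have hint : ‖((p : ℚ_[p]) - 1) * Q - 2‖ ≤ 1 := by
    rw [← Nat.cast_pred hp.out.pos, sub_eq_add_neg]
    refine (norm_add_le_max _ _).trans (max_le ?_ ?_)
    · rw [norm_mul, norm_natCast_p_sub_one, one_mul]
      exact norm_sum_range_one_div_succ_sq_le_one
    · rw [norm_neg, norm_two (by omega)]
  simpa using mul_le_mul_of_nonneg_left hint (inv_nonneg.mpr (Nat.cast_nonneg p))

end Padic

lemma pochQ_div_factorial (x : ℚ) (k : ℕ) :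
    pochQ x k / k.factorial = ∏ i ∈ range k, (x + i) / (i + 1) := by
  rw [pochQ, ← prod_range_add_one_eq_factorial, Nat.cast_prod, ← prod_div_distrib]
  push_cast
  rfl

theorem stmt_0 (p : ℕ) [hp : Fact p.Prime] (hp3 : 3 < p) :
    ‖((∑ k ∈ Finset.range p,
        (k : ℚ) * pochQ (1 / (p + 1)) k ^ (p + 1) / (k.factorial : ℚ) ^ (p + 1)
        - (p : ℚ) ^ 3 / 4 : ℚ) : ℚ_[p])‖ ≤ (p : ℝ) ^ (-4 : ℤ) := by
  simp_rw [mul_div_assoc, ← div_pow, pochQ_div_factorial, ← prod_pow]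
  push_cast
  rw [show (p : ℝ) ^ (-4 : ℤ) = (p : ℝ)⁻¹ ^ 4 by simp [zpow_neg]]
  set c : ℚ_[p] := p ^ 3 / (2 * (p + 1))
  set e : ℕ → ℚ_[p] := fun k => ∏ i ∈ range k, (1 - p / ((i : ℚ_[p]) + 1))
  set C : ℕ → ℚ_[p] := fun k => ∑ i ∈ range k, 1 / ((i : ℚ_[p]) + 1) ^ 2
  have he : ∑ k ∈ range p, (k : ℚ_[p]) * e k = 0 :=
    sum_range_mul_prod_one_sub_div_eq_zero (by omega)
  have hmain : ∑ k ∈ range p, (k : ℚ_[p]) * (e k + c * C k)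
      = c * ∑ k ∈ range p, (k : ℚ_[p]) * C k := by
    simp_rw [mul_add, sum_add_distrib, he, zero_add, mul_sum, mul_left_comm]
  refine (IsUltrametricDist.norm_sub_le_max_norm_sub _
    (∑ k ∈ range p, (k : ℚ_[p]) * (e k + c * C k)) _).trans (max_le ?_ ?_)
  · rw [← sum_sub_distrib]
    refine IsUltrametricDist.norm_sum_le_of_forall_le_of_nonneg (by positivity) fun k hk => ?_
    rw [← mul_sub]
    exact (norm_mul_le_of_le (IsUltrametricDist.norm_natCast_le_one _ k)
      (Padic.norm_prod_pow_sub_le hp3 (mem_range.mp hk))).trans_eq (one_mul _)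
  · have hq : (p : ℚ_[p]) + 1 ≠ 0 := Padic.p_add_one_ne_zero
    rw [hmain, show c * ∑ k ∈ range p, (k : ℚ_[p]) * C k - p ^ 3 / 4
      = c * (∑ k ∈ range p, (k : ℚ_[p]) * C k - (p + 1) / 2) by
        simp only [c]; field_simp; ring]
    have hc : ‖c‖ = (p : ℝ)⁻¹ ^ 3 := by
      simp [c, Padic.norm_two (by omega : 2 < p), Padic.norm_p_add_one]
    rw [norm_mul, hc]
    exact (mul_le_mul_of_nonneg_left (Padic.norm_sum_range_mul_sum_sub_le hp3)
      (by positivity)).trans_eq (by ring)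
end

section
/- For any prime p > 3, the sum over k from 0 to p-1 of k·H_k^{(3)} is congruent to (1/3)·p·B_{p-3} modulo p^2. -/
/-!
Summation by parts gives
`∑_{k<p} k H_k^{(3)} = p(p-1)/2 · H_{p-1}^{(3)} - H_{p-1}/2 + H_{p-1}^{(2)}/2`,
so it suffices that `H_{p-1}^{(3)} ≡ 0 (mod p)`, `H_{p-1} ≡ 0 (mod p²)` and
`H_{p-1}^{(2)} ≡ (2/3) p B_{p-3} (mod p²)`.

By Euler's theorem `1/i^s ≡ i^{p(p-1)-s} (mod p²)`, so `H_{p-1}^{(s)} ≡ S_e (mod p²)` for the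
power sum `S_e = ∑_{k<p} k^e`, `e = p(p-1) - s`. Faulhaber's formula and von Staudt–Clausen give
`S_e ≡ p B_e + (e/2) p² B_{e-1} (mod p²)`; for `s = 1, 3` the exponent `e` is odd, so `B_e = 0`
and the last term is small enough. For `s = 2` it remains to show
`3 S_{p(p-1)-2} ≡ 2 S_{p-3} (mod p²)`. Voronoi's doubling trick (`k ↦ 2k mod p` permutes the
residues) gives `(2^n - 1) S_n ≡ n p ∑_{j<p odd} j^{n-1} (mod p²)`, hence
`m (2^n - 1) S_n ≡ n (2^m - 1) S_m (mod p²)` whenever `m ≡ n (mod p-1)`; take `n = p - 3` and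
`m = p(p-1) - 2`.
-/

/-- `harmonic' k m` is the `k`-th harmonic number of order `m`: `∑_{i=1}^k 1/i^m`. -/
def harmonic' (k m : ℕ) : ℚ := ∑ i ∈ Finset.Icc 1 k, 1 / (i : ℚ) ^ m

open Finset Nat

def powerSum (p n : ℕ) : ℤ := ∑ k ∈ range p, (k : ℤ) ^ n

def oddPowerSum (p n : ℕ) : ℤ := ∑ k ∈ range p with Odd k, (k : ℤ) ^ n

theorem powerSum_eq_sum_Icc {p n : ℕ} (hp : 0 < p) (hn : n ≠ 0) :
    powerSum p n = ∑ k ∈ Icc 1 (p - 1), (k : ℤ) ^ n := by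
  have hrange : range p = insert 0 (Icc 1 (p - 1)) := by
    ext k
    simp only [mem_range, mem_insert, mem_Icc]
    omega
  rw [powerSum, hrange, sum_insert (by simp), Nat.cast_zero, zero_pow hn, zero_add]

theorem sum_range_two_mul {M : Type*} [AddCommMonoid M] {n : ℕ} (hn : Odd n) (f : ℕ → M) :
    ∑ k ∈ range n, f (2 * k) = ∑ j ∈ range n, if Even j then f j else f (j + n) := by
  obtain ⟨r, rfl⟩ := hn
  refine sum_nbij' (fun k => if 2 * k < 2 * r + 1 then 2 * k else 2 * k - (2 * r + 1))
    (fun j => if j % 2 = 0 then j / 2 else (j + 2 * r + 1) / 2) ?_ ?_ ?_ ?_ ?_ <;>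
  intro k hk <;> simp only [mem_range, Nat.even_iff] at hk ⊢ <;> split_ifs <;>
  first | omega | congr 1 <;> omega

theorem powerSum_voronoi {p : ℕ} (hp : Odd p) (n : ℕ) :
    (2 ^ n - 1) * powerSum p n ≡ n * p * oddPowerSum p (n - 1) [ZMOD p ^ 2] := by
  have hdouble : 2 ^ n * powerSum p n =
      ∑ j ∈ range p, if Even j then (j : ℤ) ^ n else ((j + p : ℕ) : ℤ) ^ n := by
    rw [powerSum, mul_sum, ← sum_range_two_mul hp (fun j => ((j : ℕ) : ℤ) ^ n)]
    refine sum_congr rfl fun k _ => ?_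
    push_cast
    ring
  have hdiff : (2 ^ n - 1) * powerSum p n - n * p * oddPowerSum p (n - 1) =
      ∑ j ∈ range p, if Even j then 0
        else ((j + p : ℤ) ^ n - (j : ℤ) ^ (n - 1) * p * n - (j : ℤ) ^ n) := by
    rw [sub_one_mul, hdouble, oddPowerSum, sum_filter, mul_sum, powerSum, ← sum_sub_distrib,
      ← sum_sub_distrib]
    refine sum_congr rfl fun j _ => ?_
    rcases Nat.even_or_odd j with h | h
    · simp [h, Nat.not_odd_iff_even.mpr h]
    · simp only [h, Nat.not_even_iff_odd.mpr h, if_true, if_false]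
      push_cast
      ring
  refine (Int.modEq_iff_dvd.mpr ?_).symm
  rw [hdiff]
  refine dvd_sum fun j _ => ?_
  split_ifs
  · exact dvd_zero _
  · exact sq_dvd_add_pow_sub_sub _ _ _

theorem oddPowerSum_modEq {p m n : ℕ} (hp : p.Prime) (hmn : p - 1 ∣ m - n) (hnm : n ≤ m)
    (hn : 0 < n) : oddPowerSum p m ≡ oddPowerSum p n [ZMOD p] :=
  Int.ModEq.sum fun k _ => Int.ModEq.pow_eq_pow hp hmn hnm hn k

theorem powerSum_kummer {p m n : ℕ} (hp : p.Prime) (hp2 : p ≠ 2) (hmn : p - 1 ∣ m - n)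
    (hnm : n ≤ m) (hn : 2 ≤ n) :
    m * ((2 ^ n - 1) * powerSum p n) ≡ n * ((2 ^ m - 1) * powerSum p m) [ZMOD p ^ 2] := by
  have hodd := hp.odd_of_ne_two hp2
  have hW : (p : ℤ) * oddPowerSum p (n - 1) ≡ p * oddPowerSum p (m - 1) [ZMOD p ^ 2] := by
    rw [sq]
    exact (oddPowerSum_modEq hp (by rwa [Nat.sub_sub_sub_cancel_right (by omega)]) (by omega)
      (by omega)).symm.mul_left' (c := (p : ℤ))
  calc (m : ℤ) * ((2 ^ n - 1) * powerSum p n)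
      ≡ m * (n * p * oddPowerSum p (n - 1)) [ZMOD p ^ 2] := (powerSum_voronoi hodd n).mul_left _
    _ = m * n * (p * oddPowerSum p (n - 1)) := by ring
    _ ≡ m * n * (p * oddPowerSum p (m - 1)) [ZMOD p ^ 2] := hW.mul_left _
    _ = n * (m * p * oddPowerSum p (m - 1)) := by ring
    _ ≡ n * ((2 ^ m - 1) * powerSum p m) [ZMOD p ^ 2] := (powerSum_voronoi hodd m).symm.mul_left _

theorem sum_range_pow_eq_sum_div (m n : ℕ) :
    ∑ k ∈ range m, (k : ℚ) ^ n =
      ∑ i ∈ range (n + 1), bernoulli i * n.choose i * (m : ℚ) ^ (n + 1 - i) / (n + 1 - i : ℕ) := by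
  rw [sum_range_pow]
  refine sum_congr rfl fun i hi => ?_
  have hi : i ≤ n := Nat.lt_succ_iff.mp (mem_range.mp hi)
  have hchoose : (n.choose i : ℚ) * (n + 1) = (n + 1).choose i * (n + 1 - i : ℕ) := by
    exact_mod_cast Nat.choose_mul_succ_eq n i
  rw [div_eq_div_iff (by positivity) (Nat.cast_ne_zero.mpr (by omega))]
  linear_combination (-(bernoulli i) * (m : ℚ) ^ (n + 1 - i)) * hchoose

theorem bernoulli_eq_intCast_sub_sum_inv_primes (n : ℕ) :
    ∃ (z : ℤ) (T : Finset ℕ), (∀ q ∈ T, q.Prime ∧ q - 1 ∣ n) ∧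
      bernoulli n = z - ∑ q ∈ T, (1 : ℚ) / q := by
  rcases Nat.even_or_odd n with heven | hodd
  · obtain ⟨k, rfl⟩ := heven.two_dvd
    obtain ⟨z, hz⟩ := Bernoulli.vonStaudt_clausen k
    refine ⟨z, {q ∈ range (2 * k + 2) | q.Prime ∧ q - 1 ∣ 2 * k},
      fun q hq => (mem_filter.mp hq).2, ?_⟩
    rw [hz]
    ring
  · rcases eq_or_ne n 1 with rfl | hn1
    · exact ⟨0, {2}, by simp [Nat.prime_two], by rw [bernoulli_one]; norm_num⟩
    · refine ⟨0, ∅, by simp, ?_⟩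
      rw [bernoulli_eq_zero_of_odd hodd (by have := hodd.pos; omega)]
      simp

theorem padicValNat_le_sub_three {p j : ℕ} (hp5 : 5 ≤ p) (hj : 3 ≤ j) :
    padicValNat p j ≤ j - 3 := by
  set v := padicValNat p j
  have hpow : p ^ v ≤ j := Nat.le_of_dvd (by omega) pow_padicValNat_dvd
  have hbern : 1 + v * 4 ≤ 5 ^ v := by
    have := one_add_mul_le_pow (show (-2 : ℤ) ≤ 4 by norm_num) v
    norm_num at this
    exact_mod_cast this
  have := Nat.pow_le_pow_left hp5 v
  omega

theorem not_sub_one_dvd_mul_sub_one_sub_two {p : ℕ} (hp : 4 ≤ p) :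
    ¬ p - 1 ∣ p * (p - 1) - 2 := by
  intro h
  have hN : 2 ≤ p * (p - 1) := by nlinarith [Nat.sub_add_cancel (show 1 ≤ p by omega)]
  have h2 : p - 1 ∣ 2 := by
    simpa [Nat.sub_sub_self hN] using Nat.dvd_sub (dvd_mul_left (p - 1) p) h
  have := Nat.le_of_dvd two_pos h2
  omega

theorem harmonic'_succ (N m : ℕ) :
    harmonic' (N + 1) m = harmonic' N m + 1 / ((N : ℚ) + 1) ^ m := by
  rw [harmonic', harmonic', sum_Icc_succ_top (by omega)]
  push_cast
  ring

theorem two_mul_sum_range_mul_harmonic'_three (N : ℕ) :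
    2 * ∑ k ∈ range (N + 1), (k : ℚ) * harmonic' k 3 =
      N * ((N + 1 : ℕ) * harmonic' N 3) - harmonic' N 1 + harmonic' N 2 := by
  induction N with
  | zero => simp [harmonic']
  | succ N ih =>
    rw [sum_range_succ, mul_add, ih, harmonic'_succ, harmonic'_succ, harmonic'_succ]
    push_cast
    field_simp
    ring

namespace IsUltrametricDist

variable {E : Type*} [SeminormedAddGroup E] [IsUltrametricDist E] {x y : E} {C : ℝ}

theorem norm_add_le_of_le (hx : ‖x‖ ≤ C) (hy : ‖y‖ ≤ C) : ‖x + y‖ ≤ C :=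
  (norm_add_le_max x y).trans (max_le hx hy)

theorem norm_sub_le_of_le (hx : ‖x‖ ≤ C) (hy : ‖y‖ ≤ C) : ‖x - y‖ ≤ C := by
  rw [sub_eq_add_neg]
  exact norm_add_le_of_le hx (by rwa [norm_neg])

theorem norm_le_of_norm_sub_le_s5 (h : ‖x - y‖ ≤ C) (hy : ‖y‖ ≤ C) : ‖x‖ ≤ C := by
  simpa using norm_add_le_of_le h hy

theorem norm_natCast_mul_le {R : Type*} [SeminormedRing R] [NormOneClass R] [IsUltrametricDist R]
    {n : ℕ} {y : R} (hy : ‖y‖ ≤ C) : ‖(n : R) * y‖ ≤ C :=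
  (norm_mul_le _ _).trans
    (by simpa using mul_le_mul (norm_natCast_le_one R n) hy (norm_nonneg y) zero_le_one)

end IsUltrametricDist

open IsUltrametricDist
  (norm_natCast_mul_le norm_le_of_norm_sub_le_s5 norm_sum_le_of_forall_le_of_nonneg)

section Padic

variable {p : ℕ} [hp : Fact p.Prime]

theorem norm_mul_le_zpow {x y : ℚ_[p]} {a b : ℤ} (hx : ‖x‖ ≤ (p : ℝ) ^ a)
    (hy : ‖y‖ ≤ (p : ℝ) ^ b) : ‖x * y‖ ≤ (p : ℝ) ^ (a + b) := by
  have hp0 : (0 : ℝ) < p := by exact_mod_cast hp.out.pos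
  rw [norm_mul, zpow_add₀ hp0.ne']
  exact mul_le_mul hx hy (norm_nonneg y) (zpow_nonneg hp0.le a)

theorem norm_natCast_eq_one_of_lt {n : ℕ} (h0 : 0 < n) (hn : n < p) : ‖(n : ℚ_[p])‖ = 1 :=
  Padic.norm_natCast_eq_one_iff.mpr (Nat.coprime_of_lt_prime h0.ne' hn hp.out)

theorem norm_intCast_sub_le_of_modEq {a b : ℤ} {k : ℕ} (h : a ≡ b [ZMOD p ^ k]) :
    ‖(a : ℚ_[p]) - b‖ ≤ (p : ℝ) ^ (-k : ℤ) := by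
  simpa using (Padic.norm_int_le_pow_iff_dvd (a - b) k).mpr h.symm.dvd

theorem norm_pow_totient_sub_one_le {i : ℕ} (hi : i.Coprime p) (k : ℕ) :
    ‖(i : ℚ_[p]) ^ φ (p ^ k) - 1‖ ≤ (p : ℝ) ^ (-k : ℤ) := by
  have h := Int.natCast_modEq_iff.mpr (Nat.ModEq.pow_totient (hi.pow_right k))
  push_cast at h
  simpa using norm_intCast_sub_le_of_modEq h

theorem norm_one_div_prime_eq_one {q : ℕ} (hq : q.Prime) (hqp : q ≠ p) :
    ‖(1 / q : ℚ_[p])‖ = 1 := by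
  rw [norm_div, norm_one, Padic.norm_natCast_eq_one_iff.mpr
    ((Nat.coprime_primes hp.out hq).mpr hqp.symm), div_one]

theorem norm_bernoulli_le_of_forall_prime {n : ℕ} {C : ℝ} (hC : 1 ≤ C)
    (h : ∀ q : ℕ, q.Prime → q - 1 ∣ n → ‖(1 / q : ℚ_[p])‖ ≤ C) :
    ‖(bernoulli n : ℚ_[p])‖ ≤ C := by
  obtain ⟨z, T, hT, hB⟩ := bernoulli_eq_intCast_sub_sum_inv_primes n
  rw [hB]
  push_cast
  refine IsUltrametricDist.norm_sub_le_of_le ((Padic.norm_int_le_one z).trans hC)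
    (norm_sum_le_of_forall_le_of_nonneg (zero_le_one.trans hC) fun q hq => ?_)
  simpa using h q (hT q hq).1 (hT q hq).2

theorem norm_bernoulli_le (n : ℕ) : ‖(bernoulli n : ℚ_[p])‖ ≤ p := by
  refine norm_bernoulli_le_of_forall_prime (by exact_mod_cast hp.out.one_le) fun q hq _ => ?_
  rcases eq_or_ne q p with rfl | hqp
  · simp [Padic.norm_p]
  · rw [norm_one_div_prime_eq_one hq hqp]
    exact_mod_cast hp.out.one_le

theorem norm_bernoulli_le_one {n : ℕ} (hn : ¬ p - 1 ∣ n) : ‖(bernoulli n : ℚ_[p])‖ ≤ 1 :=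
  norm_bernoulli_le_of_forall_prime le_rfl fun q hq hqn =>
    (norm_one_div_prime_eq_one hq (by rintro rfl; exact hn hqn)).le

theorem norm_p_pow_div_natCast_le (hp5 : 5 ≤ p) {j : ℕ} (hj : 3 ≤ j) :
    ‖(p : ℚ_[p]) ^ j / j‖ ≤ (p : ℝ) ^ (-3 : ℤ) := by
  have hj0 : (j : ℚ_[p]) ≠ 0 := Nat.cast_ne_zero.mpr (by omega)
  rw [norm_div, Padic.norm_p_pow, Padic.norm_eq_zpow_neg_valuation hj0, Padic.valuation_natCast,
    ← zpow_sub₀ (by positivity)]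
  have := padicValNat_le_sub_three hp5 hj
  exact zpow_le_zpow_right₀ (by exact_mod_cast hp.out.one_le) (by omega)

theorem norm_powerSum_sub_le (hp5 : 5 ≤ p) {n : ℕ} (hn : 1 ≤ n) :
    ‖(powerSum p n : ℚ_[p]) - p * bernoulli n - n * p ^ 2 * bernoulli (n - 1) / 2‖
      ≤ (p : ℝ) ^ (-2 : ℤ) := by
  obtain ⟨m, rfl⟩ : ∃ m, n = m + 1 := ⟨n - 1, by omega⟩
  have hfaulhaber := congrArg (Rat.cast : ℚ → ℚ_[p]) (sum_range_pow_eq_sum_div p (m + 1))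
  push_cast at hfaulhaber
  have hsplit : (powerSum p (m + 1) : ℚ_[p]) - p * bernoulli (m + 1)
      - ((m + 1 : ℕ) : ℚ_[p]) * p ^ 2 * bernoulli (m + 1 - 1) / 2 =
      ∑ i ∈ range m, (bernoulli i : ℚ_[p]) * (m + 1).choose i *
        ((p : ℚ_[p]) ^ (m + 1 + 1 - i) / (m + 1 + 1 - i : ℕ)) := by
    rw [powerSum]
    push_cast
    rw [hfaulhaber, sum_range_succ, sum_range_succ, Nat.choose_self, Nat.choose_succ_self_right,
      show m + 1 + 1 - (m + 1) = 1 by omega, show m + 1 + 1 - m = 2 by omega]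
    simp only [mul_div_assoc]
    push_cast
    ring
  rw [hsplit]
  refine norm_sum_le_of_forall_le_of_nonneg (by positivity) fun i hi => ?_
  have hj : 3 ≤ m + 1 + 1 - i := by have := mem_range.mp hi; omega
  have hB : ‖(bernoulli i : ℚ_[p]) * (m + 1).choose i‖ ≤ (p : ℝ) ^ (1 : ℤ) := by
    rw [mul_comm, zpow_one]
    exact norm_natCast_mul_le (norm_bernoulli_le i)
  simpa using norm_mul_le_zpow hB (norm_p_pow_div_natCast_le hp5 hj)

theorem norm_powerSum_sub_mul_bernoulli_le (hp5 : 5 ≤ p) {n : ℕ} (hn : 1 ≤ n) {a : ℤ}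
    (ha : 0 ≤ a) (hB : ‖(bernoulli (n - 1) : ℚ_[p])‖ ≤ (p : ℝ) ^ a) :
    ‖(powerSum p n : ℚ_[p]) - p * bernoulli n‖ ≤ (p : ℝ) ^ (a - 2) := by
  have htail : ‖(n : ℚ_[p]) * p ^ 2 * bernoulli (n - 1) / 2‖ ≤ (p : ℝ) ^ (a - 2) := by
    have h2 : ‖(2 : ℚ_[p])‖ = 1 := by
      simpa using norm_natCast_eq_one_of_lt (p := p) two_pos (by omega)
    rw [norm_div, h2, div_one, mul_assoc]
    refine norm_natCast_mul_le ?_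
    simpa [neg_add_eq_sub] using norm_mul_le_zpow (Padic.norm_p_pow 2).le hB
  have hsub : (powerSum p n : ℚ_[p]) - p * bernoulli n =
      ((powerSum p n : ℚ_[p]) - p * bernoulli n - n * p ^ 2 * bernoulli (n - 1) / 2)
        + n * p ^ 2 * bernoulli (n - 1) / 2 := by ring
  rw [hsub]
  exact IsUltrametricDist.norm_add_le_of_le ((norm_powerSum_sub_le hp5 hn).trans
    (zpow_le_zpow_right₀ (by exact_mod_cast hp.out.one_le) (by omega))) htail

theorem norm_powerSum_sub_mul_bernoulli_le_of_even (hp5 : 5 ≤ p) {n : ℕ} (hn : Even n)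
    (hn0 : n ≠ 0) : ‖(powerSum p n : ℚ_[p]) - p * bernoulli n‖ ≤ (p : ℝ) ^ (-2 : ℤ) := by
  have hB : ‖(bernoulli (n - 1) : ℚ_[p])‖ ≤ (p : ℝ) ^ (0 : ℤ) := by
    rw [zpow_zero]
    refine norm_bernoulli_le_one fun hdvd => ?_
    have hodd : Odd (n - 1) := Nat.Even.sub_odd (by omega) hn odd_one
    have heven : Even (n - 1) :=
      even_iff_two_dvd.mpr ((hp.out.even_sub_one (by omega)).two_dvd.trans hdvd)
    exact Nat.not_even_iff_odd.mpr hodd heven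
  simpa using norm_powerSum_sub_mul_bernoulli_le hp5 (by omega) le_rfl hB

theorem norm_powerSum_le_of_even_of_not_dvd (hp5 : 5 ≤ p) {n : ℕ} (hn : Even n) (hn0 : n ≠ 0)
    (hdvd : ¬ p - 1 ∣ n) : ‖(powerSum p n : ℚ_[p])‖ ≤ (p : ℝ) ^ (-1 : ℤ) := by
  have hpB : ‖(p : ℚ_[p]) * bernoulli n‖ ≤ (p : ℝ) ^ (-1 : ℤ) := by
    simpa using norm_mul_le_zpow (Padic.norm_p_pow 1).le
      ((norm_bernoulli_le_one hdvd).trans (zpow_zero (p : ℝ)).ge)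
  exact norm_le_of_norm_sub_le_s5 ((norm_powerSum_sub_mul_bernoulli_le_of_even hp5 hn hn0).trans
    (zpow_le_zpow_right₀ (by exact_mod_cast hp.out.one_le) (by norm_num))) hpB

theorem norm_powerSum_le_of_odd (hp5 : 5 ≤ p) {n : ℕ} (hn : Odd n) (hn3 : 3 ≤ n) {a : ℤ}
    (ha : 0 ≤ a) (hB : ‖(bernoulli (n - 1) : ℚ_[p])‖ ≤ (p : ℝ) ^ a) :
    ‖(powerSum p n : ℚ_[p])‖ ≤ (p : ℝ) ^ (a - 2) := by
  simpa [bernoulli_eq_zero_of_odd hn (by omega)] using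
    norm_powerSum_sub_mul_bernoulli_le hp5 (by omega) ha hB

theorem norm_harmonic'_sub_powerSum_le {s : ℕ} (hs : s < p * (p - 1)) :
    ‖((harmonic' (p - 1) s : ℚ) : ℚ_[p]) - powerSum p (p * (p - 1) - s)‖
      ≤ (p : ℝ) ^ (-2 : ℤ) := by
  rw [harmonic', powerSum_eq_sum_Icc hp.out.pos (by omega)]
  push_cast
  rw [← sum_sub_distrib]
  refine norm_sum_le_of_forall_le_of_nonneg (by positivity) fun i hi => ?_
  obtain ⟨hi1, hip⟩ := mem_Icc.mp hi
  have hp2 := hp.out.two_le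
  have hunit : ‖(i : ℚ_[p])‖ = 1 := norm_natCast_eq_one_of_lt (by omega) (by omega)
  have hi0 : (i : ℚ_[p]) ≠ 0 := Nat.cast_ne_zero.mpr (by omega)
  have heuler := norm_pow_totient_sub_one_le (p := p)
    (Nat.coprime_of_lt_prime (n := i) (by omega) (by omega) hp.out).symm 2
  rw [Nat.totient_prime_pow hp.out two_pos, show 2 - 1 = 1 from rfl, pow_one] at heuler
  have hsplit : (i : ℚ_[p]) ^ (p * (p - 1)) = i ^ (p * (p - 1) - s) * i ^ s := by
    rw [← pow_add, Nat.sub_add_cancel hs.le]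
  have hid : 1 / (i : ℚ_[p]) ^ s - i ^ (p * (p - 1) - s) =
      -((i : ℚ_[p]) ^ (p * (p - 1)) - 1) / i ^ s := by
    rw [hsplit]
    field_simp
    ring
  rw [hid, norm_div, norm_neg, norm_pow, hunit, one_pow, div_one]
  exact_mod_cast heuler

theorem norm_harmonic'_three_le (hp5 : 5 ≤ p) :
    ‖((harmonic' (p - 1) 3 : ℚ) : ℚ_[p])‖ ≤ (p : ℝ) ^ (-1 : ℤ) := by
  have hN : 20 ≤ p * (p - 1) := Nat.mul_le_mul hp5 (by omega : 4 ≤ p - 1)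
  have hodd : Odd (p * (p - 1) - 3) :=
    Nat.Even.sub_odd (by omega) (Nat.even_mul_pred_self p) (by decide)
  have hS := norm_powerSum_le_of_odd hp5 hodd (by omega) zero_le_one
    ((norm_bernoulli_le (p * (p - 1) - 3 - 1)).trans (zpow_one (p : ℝ)).ge)
  rw [show (1 : ℤ) - 2 = -1 by norm_num] at hS
  exact norm_le_of_norm_sub_le_s5 ((norm_harmonic'_sub_powerSum_le (by omega)).trans
    (zpow_le_zpow_right₀ (by exact_mod_cast hp.out.one_le) (by norm_num))) hS

theorem norm_harmonic'_one_le (hp5 : 5 ≤ p) :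
    ‖((harmonic' (p - 1) 1 : ℚ) : ℚ_[p])‖ ≤ (p : ℝ) ^ (-2 : ℤ) := by
  have hN : 20 ≤ p * (p - 1) := Nat.mul_le_mul hp5 (by omega : 4 ≤ p - 1)
  have hodd : Odd (p * (p - 1) - 1) :=
    Nat.Even.sub_odd (by omega) (Nat.even_mul_pred_self p) odd_one
  have hB : ‖(bernoulli (p * (p - 1) - 1 - 1) : ℚ_[p])‖ ≤ (p : ℝ) ^ (0 : ℤ) := by
    rw [zpow_zero, Nat.sub_sub]
    exact norm_bernoulli_le_one (not_sub_one_dvd_mul_sub_one_sub_two (by omega))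
  have hS := norm_powerSum_le_of_odd hp5 hodd (by omega) le_rfl hB
  rw [zero_sub] at hS
  exact norm_le_of_norm_sub_le_s5 (norm_harmonic'_sub_powerSum_le (by omega)) hS

theorem norm_powerSum_kummer (hp2 : p ≠ 2) {m n : ℕ} (hmn : p - 1 ∣ m - n) (hnm : n ≤ m)
    (hn : 2 ≤ n) (h2n : ‖(2 : ℚ_[p]) ^ n - 1‖ = 1)
    (hSm : ‖(powerSum p m : ℚ_[p])‖ ≤ (p : ℝ) ^ (-1 : ℤ)) :
    ‖(m : ℚ_[p]) * powerSum p n - n * powerSum p m‖ ≤ (p : ℝ) ^ (-2 : ℤ) := by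
  have hK := norm_intCast_sub_le_of_modEq (powerSum_kummer hp.out hp2 hmn hnm hn)
  have h2 := norm_intCast_sub_le_of_modEq (k := 1)
    (by simpa using Int.ModEq.pow_eq_pow hp.out hmn hnm (by omega) 2)
  push_cast at hK h2
  have hsplit : ((2 : ℚ_[p]) ^ n - 1) * (m * powerSum p n - n * powerSum p m) =
      (m * ((2 ^ n - 1) * powerSum p n) - n * ((2 ^ m - 1) * powerSum p m))
        + n * ((2 ^ m - 2 ^ n) * powerSum p m) := by ring
  have hbound : ‖((2 : ℚ_[p]) ^ n - 1) * (m * powerSum p n - n * powerSum p m)‖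
      ≤ (p : ℝ) ^ (-2 : ℤ) := by
    rw [hsplit]
    exact IsUltrametricDist.norm_add_le_of_le hK
      (norm_natCast_mul_le ((norm_mul_le_zpow h2 hSm).trans_eq (by norm_num)))
  rwa [norm_mul, h2n, one_mul] at hbound

theorem norm_two_pow_sub_three_sub_one (hp5 : 5 ≤ p) : ‖(2 : ℚ_[p]) ^ (p - 3) - 1‖ = 1 := by
  have hfermat : ‖(2 : ℚ_[p]) ^ (p - 1) - 1‖ < 1 := by
    have h := norm_pow_totient_sub_one_le (p := p)
      ((Nat.coprime_primes Nat.prime_two hp.out).mpr (by omega)) 1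
    rw [pow_one, Nat.totient_prime hp.out, Nat.cast_ofNat] at h
    exact h.trans_lt (zpow_lt_one_of_neg₀ (by exact_mod_cast hp.out.one_lt) (by norm_num))
  have h3 : ‖(-3 : ℚ_[p])‖ = 1 := by
    simpa using norm_natCast_eq_one_of_lt (p := p) (n := 3) (by norm_num) (by omega)
  have h4 : ‖(4 : ℚ_[p])‖ = 1 := by
    simpa using norm_natCast_eq_one_of_lt (p := p) (n := 4) (by norm_num) (by omega)
  have hsplit : 4 * ((2 : ℚ_[p]) ^ (p - 3) - 1) = (2 ^ (p - 1) - 1) + -3 := by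
    rw [show p - 1 = p - 3 + 2 by omega, pow_add]
    ring
  have h := IsUltrametricDist.norm_add_eq_max_of_norm_ne_norm (hfermat.trans_eq h3.symm).ne
  rwa [← hsplit, norm_mul, h4, one_mul, h3, max_eq_right hfermat.le] at h

theorem norm_three_mul_powerSum_sub_le (hp5 : 5 ≤ p) :
    ‖3 * (powerSum p (p * (p - 1) - 2) : ℚ_[p]) - 2 * powerSum p (p - 3)‖
      ≤ (p : ℝ) ^ (-2 : ℤ) := by
  set N := p * (p - 1) with hNdef
  have hN : 20 ≤ N := Nat.mul_le_mul hp5 (by omega : 4 ≤ p - 1)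
  have hNp : p ≤ N := Nat.le_mul_of_pos_right p (by omega)
  have hdiff : N - 2 - (p - 3) = (p - 1) * (p - 1) := by
    obtain ⟨q, rfl⟩ : ∃ q, p = q + 5 := ⟨p - 5, by omega⟩
    simp only [hNdef, show q + 5 - 1 = q + 4 by omega, show q + 5 - 3 = q + 2 by omega]
    ring_nf
    omega
  have ha : ‖(powerSum p (p - 3) : ℚ_[p])‖ ≤ (p : ℝ) ^ (-1 : ℤ) :=
    norm_powerSum_le_of_even_of_not_dvd hp5
      (Nat.Odd.sub_odd (hp.out.odd_of_ne_two (by omega)) (by decide))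
      (by omega) (Nat.not_dvd_of_pos_of_lt (by omega) (by omega))
  have hb : ‖(powerSum p (N - 2) : ℚ_[p])‖ ≤ (p : ℝ) ^ (-1 : ℤ) :=
    norm_powerSum_le_of_even_of_not_dvd hp5 ((Nat.even_mul_pred_self p).tsub even_two)
      (by omega) (not_sub_one_dvd_mul_sub_one_sub_two (by omega))
  have hK := norm_powerSum_kummer (by omega) (by rw [hdiff]; exact dvd_mul_right _ _) (by omega)
    (by omega) (norm_two_pow_sub_three_sub_one hp5) hb
  have hm : ((N - 2 : ℕ) : ℚ_[p]) = p * (p - 1) - 2 := by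
    rw [Nat.cast_sub (by omega), hNdef, Nat.cast_mul, Nat.cast_sub hp.out.one_le]
    simp
  have hn : ((p - 3 : ℕ) : ℚ_[p]) = p - 3 := by
    rw [Nat.cast_sub (by omega)]
    simp
  have hsplit : 3 * (powerSum p (N - 2) : ℚ_[p]) - 2 * powerSum p (p - 3) =
      (((N - 2 : ℕ) : ℚ_[p]) * powerSum p (p - 3) - ((p - 3 : ℕ) : ℚ_[p]) * powerSum p (N - 2))
        - p * (p * powerSum p (p - 3) - powerSum p (p - 3) - powerSum p (N - 2)) := by
    rw [hm, hn]
    ring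
  have hpnorm : ‖(p : ℚ_[p])‖ ≤ (p : ℝ) ^ (-1 : ℤ) :=
    (Padic.norm_p.trans (zpow_neg_one _).symm).le
  have htail : ‖(p : ℚ_[p]) * powerSum p (p - 3) - powerSum p (p - 3) - powerSum p (N - 2)‖
      ≤ (p : ℝ) ^ (-1 : ℤ) :=
    IsUltrametricDist.norm_sub_le_of_le
      (IsUltrametricDist.norm_sub_le_of_le (norm_natCast_mul_le ha) ha) hb
  rw [hsplit]
  exact IsUltrametricDist.norm_sub_le_of_le hK
    ((norm_mul_le_zpow hpnorm htail).trans_eq (by norm_num))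

theorem norm_harmonic'_two_sub_le (hp5 : 5 ≤ p) :
    ‖((harmonic' (p - 1) 2 : ℚ) : ℚ_[p]) - 2 / 3 * p * bernoulli (p - 3)‖
      ≤ (p : ℝ) ^ (-2 : ℤ) := by
  have hN : 20 ≤ p * (p - 1) := Nat.mul_le_mul hp5 (by omega : 4 ≤ p - 1)
  have hH := norm_natCast_mul_le (n := 3) (norm_harmonic'_sub_powerSum_le (p := p) (s := 2)
    (by omega))
  have hS := norm_natCast_mul_le (n := 2) (norm_powerSum_sub_mul_bernoulli_le_of_even
    (n := p - 3) hp5 (Nat.Odd.sub_odd (hp.out.odd_of_ne_two (by omega)) (by decide)) (by omega))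
  push_cast at hH hS
  have hsum := IsUltrametricDist.norm_add_le_of_le
    (IsUltrametricDist.norm_add_le_of_le hH (norm_three_mul_powerSum_sub_le hp5)) hS
  have hsplit : 3 * (((harmonic' (p - 1) 2 : ℚ) : ℚ_[p]) - 2 / 3 * p * bernoulli (p - 3)) =
      3 * ((harmonic' (p - 1) 2 : ℚ_[p]) - powerSum p (p * (p - 1) - 2))
        + (3 * (powerSum p (p * (p - 1) - 2) : ℚ_[p]) - 2 * powerSum p (p - 3))
        + 2 * ((powerSum p (p - 3) : ℚ_[p]) - p * bernoulli (p - 3)) := by ring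
  have h3 : ‖(3 : ℚ_[p])‖ = 1 := by
    simpa using norm_natCast_eq_one_of_lt (p := p) (n := 3) (by norm_num) (by omega)
  rwa [← one_mul ‖_ - _‖, ← h3, ← norm_mul, hsplit]

end Padic

theorem stmt_5 (p : ℕ) [hp : Fact p.Prime] (hp3 : 3 < p) :
    ‖((∑ k ∈ Finset.range p, (k : ℚ) * harmonic' k 3
        - 1 / 3 * (p : ℚ) * bernoulli (p - 3) : ℚ) : ℚ_[p])‖ ≤ (p : ℝ) ^ (-2 : ℤ) := by
  have hp5 : 5 ≤ p := by
    have : p ≠ 4 := by rintro rfl; exact absurd hp.out (by decide)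
    omega
  have hH3 := norm_natCast_mul_le (n := p - 1) (norm_mul_le_zpow
    (Padic.norm_p.trans (zpow_neg_one _).symm).le (norm_harmonic'_three_le hp5))
  have hsum := IsUltrametricDist.norm_add_le_of_le
    (IsUltrametricDist.norm_sub_le_of_le (hH3.trans_eq (by norm_num)) (norm_harmonic'_one_le hp5))
    (norm_harmonic'_two_sub_le hp5)
  have hparts := two_mul_sum_range_mul_harmonic'_three (p - 1)
  rw [Nat.sub_add_cancel hp.out.one_le] at hparts
  have hsplit : 2 * (((∑ k ∈ range p, (k : ℚ) * harmonic' k 3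
      - 1 / 3 * (p : ℚ) * bernoulli (p - 3) : ℚ) : ℚ_[p])) =
      ((p - 1 : ℕ) : ℚ_[p]) * (p * (harmonic' (p - 1) 3 : ℚ_[p])) - (harmonic' (p - 1) 1 : ℚ_[p])
        + ((harmonic' (p - 1) 2 : ℚ_[p]) - 2 / 3 * p * bernoulli (p - 3)) := by
    have hparts' := congrArg (Rat.cast : ℚ → ℚ_[p]) hparts
    push_cast at hparts' ⊢
    linear_combination hparts'
  have h2 : ‖(2 : ℚ_[p])‖ = 1 := by
    simpa using norm_natCast_eq_one_of_lt (p := p) (n := 2) two_pos (by omega)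
  rwa [← one_mul ‖_‖, ← h2, ← norm_mul, hsplit]
end

section
/- For any prime p > 3, the sum over k from 0 to p-1 of k·H_k^{(4)} is congruent to 0 modulo p. -/
/-!
Exchanging the order of summation, `∑_{k<p} k H_k^{(m)} = ∑_{0<i<p} i^{-m} ∑_{i ≤ k < p} k`, and
modulo `p` the inner sum is `(i - i²)/2`. Hence twice the sum is `∑_{0<i<p} (i^{1-m} - i^{2-m})`, a
difference of two sums `∑_{x : ZMod p} x⁻¹ ^ j` with `j < p - 1`, and both vanish.
Since every `1/i` with `0 < i < p` is a unit of `ℤ_[p]`, the rational sum is a `p`-adic integer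
whose reduction modulo `p` is this sum.
-/

open Finset

theorem FiniteField.sum_inv_pow_lt_card_sub_one (K : Type*) [Field K] [Fintype K] {i : ℕ}
    (hi : i < Fintype.card K - 1) : ∑ x : K, x⁻¹ ^ i = 0 :=
  (Equiv.sum_comp (Equiv.inv K) (· ^ i)).trans (FiniteField.sum_pow_lt_card_sub_one K i hi)

theorem ZMod.sum_range_natCast {n : ℕ} [NeZero n] {M : Type*} [AddCommMonoid M]
    (f : ZMod n → M) : ∑ i ∈ range n, f i = ∑ x, f x :=
  sum_nbij' (↑) ZMod.val (by simp) (by simp [ZMod.val_lt])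
    (fun _ hi => ZMod.val_cast_of_lt (mem_range.1 hi)) (fun x _ => ZMod.natCast_zmod_val x)
    (fun _ _ => rfl)

theorem sum_range_natCast_mul_two {R : Type*} [CommRing R] (n : ℕ) :
    (∑ k ∈ range n, (k : R)) * 2 = n * (n - 1) := by
  induction n with
  | zero => simp
  | succ n ih => rw [sum_range_succ, add_mul, ih]; push_cast; ring

theorem inv_pow_mul_sub_sq {K : Type*} [Field K] (x : K) {m : ℕ} (hm : 3 ≤ m) :
    x⁻¹ ^ m * (x - x ^ 2) = x⁻¹ ^ (m - 1) - x⁻¹ ^ (m - 2) := by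
  obtain ⟨n, rfl⟩ := Nat.exists_eq_add_of_le' hm
  rcases eq_or_ne x 0 with rfl | hx
  · simp
  · rw [show n + 3 - 1 = n + 2 by omega, show n + 3 - 2 = n + 1 by omega]
    simp only [inv_pow]
    field_simp
    ring

namespace ZMod

variable {p : ℕ} [Fact p.Prime]

theorem sum_Ico_natCast_mul_two {i : ℕ} (hi : i ≤ p) :
    (∑ k ∈ Ico i p, (k : ZMod p)) * 2 = i - i ^ 2 := by
  rw [sum_Ico_eq_sub _ hi, sub_mul, sum_range_natCast_mul_two, sum_range_natCast_mul_two,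
    natCast_self]
  ring

theorem sum_range_mul_sum_inv_pow_eq_zero {m : ℕ} (hm : 3 ≤ m) (hmp : m < p) :
    ∑ k ∈ range p, (k : ZMod p) * ∑ i ∈ Icc 1 k, (i : ZMod p)⁻¹ ^ m = 0 := by
  -- `0⁻¹ = 0` in `ZMod p`, so the term `i = 0` may be added to the inner sum.
  have hinner (k : ℕ) :
      ∑ i ∈ Icc 1 k, (i : ZMod p)⁻¹ ^ m = ∑ i ∈ Ico 0 (k + 1), (i : ZMod p)⁻¹ ^ m := by
    rw [sum_eq_sum_Ico_succ_bot (by omega : 0 < k + 1), Ico_add_one_right_eq_Icc]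
    simp [zero_pow (by omega : m ≠ 0)]
  have hswap : ∑ k ∈ range p, (k : ZMod p) * ∑ i ∈ Icc 1 k, (i : ZMod p)⁻¹ ^ m
      = ∑ i ∈ range p, (∑ k ∈ Ico i p, (k : ZMod p)) * (i : ZMod p)⁻¹ ^ m := by
    simp_rw [hinner, mul_sum, sum_mul, range_eq_Ico]
    exact (sum_Ico_Ico_comm 0 p _).symm
  have htwo : (2 : ZMod p) ≠ 0 := Ring.two_ne_zero (by rw [ringChar_zmod_n]; omega)
  have hcard : Fintype.card (ZMod p) = p := card p
  refine (mul_eq_zero.1 ?_).resolve_right htwo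
  calc (∑ k ∈ range p, (k : ZMod p) * ∑ i ∈ Icc 1 k, (i : ZMod p)⁻¹ ^ m) * 2
      = ∑ i ∈ range p, ((i : ZMod p)⁻¹ ^ (m - 1) - (i : ZMod p)⁻¹ ^ (m - 2)) := by
        rw [hswap, sum_mul]
        refine sum_congr rfl fun i hi => ?_
        rw [mul_right_comm, sum_Ico_natCast_mul_two (mem_range.1 hi).le, mul_comm,
          inv_pow_mul_sub_sq _ hm]
    _ = 0 := by
        rw [sum_range_natCast (fun x : ZMod p => x⁻¹ ^ (m - 1) - x⁻¹ ^ (m - 2)), sum_sub_distrib,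
          FiniteField.sum_inv_pow_lt_card_sub_one _ (by omega),
          FiniteField.sum_inv_pow_lt_card_sub_one _ (by omega), sub_zero]

end ZMod

namespace PadicInt

variable {p : ℕ} [Fact p.Prime]

theorem norm_lt_one_iff_toZMod_eq_zero {z : ℤ_[p]} : ‖z‖ < 1 ↔ toZMod z = 0 := by
  rw [← RingHom.mem_ker, ker_toZMod, IsLocalRing.mem_maximalIdeal, mem_nonunits]

theorem toZMod_inv (z : ℤ_[p]) : toZMod z.inv = (toZMod z)⁻¹ := by
  by_cases hz : ‖z‖ = 1
  · exact eq_inv_of_mul_eq_one_right (by rw [← map_mul, mul_inv hz, map_one])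
  · have hz' : toZMod z = 0 := norm_lt_one_iff_toZMod_eq_zero.1 ((norm_le_one z).lt_of_ne hz)
    obtain ⟨k, hk⟩ := z
    simp_all [inv]

theorem coe_inv_of_norm_eq_one {z : ℤ_[p]} (hz : ‖z‖ = 1) :
    ((z.inv : ℤ_[p]) : ℚ_[p]) = (z : ℚ_[p])⁻¹ :=
  eq_inv_of_mul_eq_one_right (by rw [← coe_mul, mul_inv hz, coe_one])

theorem norm_le_inv_of_toZMod_eq_zero {z : ℤ_[p]} (hz : toZMod z = 0) :
    ‖z‖ ≤ (p : ℝ) ^ (-1 : ℤ) := by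
  have hz1 : ‖z‖ < (p : ℝ) ^ (0 : ℤ) := by simpa using norm_lt_one_iff_toZMod_eq_zero.2 hz
  simpa using (norm_lt_pow_iff_norm_le_pow_sub_one z 0).1 hz1

end PadicInt

open PadicInt in
theorem norm_sum_mul_harmonic'_le {p : ℕ} [Fact p.Prime] {m : ℕ} (hm : 3 ≤ m) (hmp : m < p) :
    ‖((∑ k ∈ range p, (k : ℚ) * harmonic' k m : ℚ) : ℚ_[p])‖ ≤ (p : ℝ) ^ (-1 : ℤ) := by
  set z : ℤ_[p] := ∑ k ∈ range p, (k : ℤ_[p]) * ∑ i ∈ Icc 1 k, (i : ℤ_[p]).inv ^ m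
  have hcoe : (z : ℚ_[p]) = ((∑ k ∈ range p, (k : ℚ) * harmonic' k m : ℚ) : ℚ_[p]) := by
    simp only [z, harmonic', PadicInt.coe_sum, PadicInt.coe_mul, PadicInt.coe_natCast,
      PadicInt.coe_pow]
    push_cast
    refine sum_congr rfl fun k hk => congrArg _ (sum_congr rfl fun i hi => ?_)
    have hi' : p.Coprime i := Nat.coprime_of_lt_prime (by grind) (by grind) Fact.out
    rw [coe_inv_of_norm_eq_one (norm_natCast_eq_one_iff.2 hi'), PadicInt.coe_natCast, one_div,
      inv_pow]
  have hres : toZMod z = 0 := by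
    simpa [z, map_sum, toZMod_inv] using ZMod.sum_range_mul_sum_inv_pow_eq_zero hm hmp
  rw [← hcoe, padic_norm_e_of_padicInt]
  exact norm_le_inv_of_toZMod_eq_zero hres

theorem stmt_6 (p : ℕ) [hp : Fact p.Prime] (hp3 : 3 < p) :
    ‖((∑ k ∈ Finset.range p, (k : ℚ) * harmonic' k 4 : ℚ) : ℚ_[p])‖
      ≤ (p : ℝ) ^ (-1 : ℤ) := by
  have hp4 : p ≠ 4 := by
    rintro rfl
    exact absurd hp.out (by decide)
  exact norm_sum_mul_harmonic'_le (by norm_num) (by omega)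
end

section
/- For any prime p > 3, the sum over k from 1 to p-1 of k times the sum over 1 ≤ i < j ≤ k of H_k^{(2)}/(i j) is congruent to 7/8 + (1/2)·B_{p-3} modulo p. -/
/-!
All denominators in the sum are prime to `p`, and so are those of the Bernoulli numbers `B_i` with
`i < p - 1` (by their recursion), so the congruence can be checked in `ZMod p`, reached through
`ℤ_[p]`. Write `N = p - 1` and `H_k`, `H_k^{(2)}`, `e₂(k)`, `e₃(k)` for the first two power sums
and the elementary symmetric functions of `1, 1/2, …, 1/k`. Modulo `p`, `∑_{i ≤ N} i^{-e} = 0` for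
`e = 1, 2, 3`, so `H_N`, `H_N^{(2)}`, `e₂(N)` and `e₃(N)` vanish. Summation by parts against the
weights `1` and `k`, whose partial sums `k + 1` and `k (k + 1) / 2` vanish at `k = N` as `N ≡ -1`,
replaces a sequence by its increments, where the factor `k + 1` cancels the new denominator
`1 / (k + 1)`. Applied to `H`, `e₂`, `H^{(2)}`, `H^{(2)} H` and `H^{(2)} e₂` in turn, this gives
`8 ∑_k k H_k^{(2)} e₂(k) ≡ 7 + 4 A` with `A = ∑_{i < j} 1 / (i j²)`. Faulhaber's formula for
`∑ m^{p-2}`, with `m^{p-2} ≡ 1 / m`, identifies `A` with `B_{p-3}` modulo `p`.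
-/

open Finset

namespace HarmonicBernoulli

section SummationByParts

variable {R : Type*} [CommRing R]

theorem sum_range_eq_mul_sub_sum (X : ℕ → R) (n : ℕ) :
    ∑ k ∈ range n, X k = n * X n - ∑ k ∈ range n, (k + 1) * (X (k + 1) - X k) := by
  induction n with
  | zero => simp
  | succ n ih => rw [sum_range_succ, sum_range_succ, ih]; push_cast; ring

theorem two_mul_sum_range_mul_eq (X : ℕ → R) (n : ℕ) :
    2 * ∑ k ∈ range n, k * X k
      = n * (n - 1) * X n - ∑ k ∈ range n, (k + 1) * k * (X (k + 1) - X k) := by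
  induction n with
  | zero => simp
  | succ n ih => rw [sum_range_succ, sum_range_succ, mul_add, ih]; push_cast; ring

end SummationByParts

section HarmonicSums

variable {R : Type*} [CommRing R] (r : ℕ → R)

/- `r i` stands for `1 / (i + 1)`. The sums are defined over any commutative ring so that they can
be transported along `ℤ_[p] → ℚ_[p]` and `ℤ_[p] → ZMod p`, as `ℤ_[p]` has no field inverse. -/

def harmonicSum (n : ℕ) : R := ∑ i ∈ range n, r i

def harmonicSumSq (n : ℕ) : R := ∑ i ∈ range n, r i ^ 2

def harmonicSumCube (n : ℕ) : R := ∑ i ∈ range n, r i ^ 3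

def harmonicPairSum (n : ℕ) : R := ∑ j ∈ range n, r j * harmonicSum r j

def harmonicTripleSum (n : ℕ) : R := ∑ j ∈ range n, r j * harmonicPairSum r j

def harmonicPairSumSq (n : ℕ) : R := ∑ j ∈ range n, r j ^ 2 * harmonicSum r j

def weightedSum (n : ℕ) : R := ∑ k ∈ range n, k * (harmonicSumSq r k * harmonicPairSum r k)

@[simp] theorem harmonicSum_zero : harmonicSum r 0 = 0 := sum_range_zero _
@[simp] theorem harmonicSumSq_zero : harmonicSumSq r 0 = 0 := sum_range_zero _
@[simp] theorem harmonicSumCube_zero : harmonicSumCube r 0 = 0 := sum_range_zero _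
@[simp] theorem harmonicPairSum_zero : harmonicPairSum r 0 = 0 := sum_range_zero _
@[simp] theorem harmonicTripleSum_zero : harmonicTripleSum r 0 = 0 := sum_range_zero _

@[simp] theorem harmonicSum_succ (n : ℕ) : harmonicSum r (n + 1) = harmonicSum r n + r n :=
  sum_range_succ _ _
@[simp] theorem harmonicSumSq_succ (n : ℕ) :
    harmonicSumSq r (n + 1) = harmonicSumSq r n + r n ^ 2 :=
  sum_range_succ _ _
@[simp] theorem harmonicSumCube_succ (n : ℕ) :
    harmonicSumCube r (n + 1) = harmonicSumCube r n + r n ^ 3 :=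
  sum_range_succ _ _
@[simp] theorem harmonicPairSum_succ (n : ℕ) :
    harmonicPairSum r (n + 1) = harmonicPairSum r n + r n * harmonicSum r n :=
  sum_range_succ _ _
@[simp] theorem harmonicTripleSum_succ (n : ℕ) :
    harmonicTripleSum r (n + 1) = harmonicTripleSum r n + r n * harmonicPairSum r n :=
  sum_range_succ _ _

theorem two_mul_harmonicPairSum (n : ℕ) :
    2 * harmonicPairSum r n = harmonicSum r n ^ 2 - harmonicSumSq r n := by
  induction n with
  | zero => simp
  | succ n ih =>
    simp only [harmonicPairSum_succ, harmonicSum_succ, harmonicSumSq_succ]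
    linear_combination ih

theorem six_mul_harmonicTripleSum (n : ℕ) :
    6 * harmonicTripleSum r n = harmonicSum r n ^ 3
      - 3 * harmonicSum r n * harmonicSumSq r n + 2 * harmonicSumCube r n := by
  induction n with
  | zero => simp
  | succ n ih =>
    simp only [harmonicTripleSum_succ, harmonicSum_succ, harmonicSumSq_succ, harmonicSumCube_succ]
    linear_combination ih + 3 * r n * two_mul_harmonicPairSum r n

theorem map_weightedSum {R' : Type*} [CommRing R'] (f : R →+* R') (n : ℕ) :
    f (weightedSum r n) = weightedSum (f ∘ r) n := by
  simp [weightedSum, harmonicSumSq, harmonicPairSum, harmonicSum, map_sum]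

end HarmonicSums

section Reindexing

theorem sum_Icc_one_eq_sum_range {M : Type*} [AddCommMonoid M] (f : ℕ → M) (n : ℕ) :
    ∑ i ∈ Icc 1 n, f i = ∑ i ∈ range n, f (i + 1) := by
  rw [← Finset.Ico_add_one_right_eq_Icc, sum_Ico_eq_sum_range]
  simp [add_comm]

theorem sum_Icc_eq_weightedSum {F : Type*} [Field F] (r : ℕ → F) (n : ℕ)
    (hr : ∀ i < n, r i = ((i : F) + 1)⁻¹) :
    ∑ k ∈ Icc 1 n, (k : F) * ∑ j ∈ Icc 1 k, ∑ i ∈ Ico 1 j,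
      (∑ l ∈ Icc 1 k, 1 / (l : F) ^ 2) / ((i : F) * j) = weightedSum r (n + 1) := by
  have hG : ∀ m ≤ n, ∑ l ∈ Icc 1 m, 1 / (l : F) ^ 2 = harmonicSumSq r m := fun m hm => by
    rw [sum_Icc_one_eq_sum_range, harmonicSumSq]
    refine sum_congr rfl fun l hl => ?_
    rw [hr l (by simp at hl; omega)]
    push_cast; field_simp
  have hS : ∀ m ≤ n, ∑ j ∈ Icc 1 m, ∑ i ∈ Ico 1 j, 1 / ((i : F) * j) = harmonicPairSum r m :=
    fun m hm => by
    rw [sum_Icc_one_eq_sum_range, harmonicPairSum]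
    refine sum_congr rfl fun j hj => ?_
    rw [Finset.Ico_add_one_right_eq_Icc, sum_Icc_one_eq_sum_range, harmonicSum, mul_sum]
    have hj : j < n := by simp at hj; omega
    refine sum_congr rfl fun i hi => ?_
    rw [hr j hj, hr i (by simp at hi; omega)]
    push_cast; field_simp
  rw [weightedSum, sum_range_succ', sum_Icc_one_eq_sum_range]
  simp only [Nat.cast_zero, zero_mul, add_zero]
  refine sum_congr rfl fun k hk => ?_
  have hk : k + 1 ≤ n := by simp at hk; omega
  rw [← hG _ hk, ← hS _ hk, Nat.cast_succ]
  simp only [mul_sum]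
  exact Finset.sum_congr rfl fun j _ => Finset.sum_congr rfl fun i _ => by rw [div_eq_mul_one_div]

end Reindexing

section ZModP

def recip (p i : ℕ) : ZMod p := ((i : ZMod p) + 1)⁻¹

theorem natCast_ne_zero_of_lt {p n : ℕ} (hn₀ : 0 < n) (hn : n < p) : (n : ZMod p) ≠ 0 := by
  rw [Ne, ZMod.natCast_eq_zero_iff]
  exact Nat.not_dvd_of_pos_of_lt hn₀ hn

variable {p : ℕ} [Fact p.Prime]

theorem natCast_sub_one_eq_neg_one : ((p - 1 : ℕ) : ZMod p) = -1 := by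
  rw [Nat.cast_pred (Fact.out : p.Prime).pos, ZMod.natCast_self, zero_sub]

theorem natCast_add_one_mul_recip {i : ℕ} (hi : i < p - 1) :
    ((i : ZMod p) + 1) * recip p i = 1 :=
  mul_inv_cancel₀ (by exact_mod_cast natCast_ne_zero_of_lt (n := i + 1) (by omega) (by omega))

theorem sum_range_eq_sum_units {M : Type*} [AddCommMonoid M] (f : ZMod p → M) :
    ∑ i ∈ range (p - 1), f ((i : ZMod p) + 1) = ∑ u : (ZMod p)ˣ, f u := by
  have hp := (Fact.out : p.Prime).two_le
  refine sum_bij' (fun i hi => Units.mk0 ((i : ZMod p) + 1) (left_ne_zero_of_mul_eq_one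
      (natCast_add_one_mul_recip (mem_range.1 hi))))
    (fun u _ => (u : ZMod p).val - 1) (fun _ _ => mem_univ _) (fun u _ => ?_) (fun i hi => ?_)
    (fun u _ => ?_) (fun _ _ => rfl)
  · have := ZMod.val_lt (u : ZMod p)
    rw [mem_range]; omega
  · rw [mem_range] at hi
    rw [Units.val_mk0, ← Nat.cast_add_one, ZMod.val_cast_of_lt (by omega), Nat.add_sub_cancel]
  · ext
    simp

theorem sum_recip_pow {e : ℕ} (he₀ : 0 < e) (he : e < p - 1) :
    ∑ i ∈ range (p - 1), recip p i ^ e = 0 := by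
  simp only [recip]
  rw [sum_range_eq_sum_units (fun x => x⁻¹ ^ e)]
  simp only [← Units.val_inv_eq_inv_val]
  rw [Fintype.sum_equiv (Equiv.inv _) (fun u : (ZMod p)ˣ => ((u⁻¹ : (ZMod p)ˣ) : ZMod p) ^ e)
      (fun u => (u : ZMod p) ^ e) fun _ => rfl,
    FiniteField.sum_pow_units,
    ZMod.card, if_neg (Nat.not_dvd_of_pos_of_lt he₀ he)]

theorem harmonicSum_recip (hp : 2 < p) : harmonicSum (recip p) (p - 1) = 0 := by
  rw [harmonicSum]
  simpa only [pow_one] using sum_recip_pow (p := p) one_pos (by omega)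

theorem harmonicSumSq_recip (hp : 3 < p) : harmonicSumSq (recip p) (p - 1) = 0 :=
  sum_recip_pow two_pos (by omega)

theorem harmonicSumCube_recip (hp : 4 < p) : harmonicSumCube (recip p) (p - 1) = 0 :=
  sum_recip_pow three_pos (by omega)

theorem harmonicPairSum_recip (hp : 3 < p) : harmonicPairSum (recip p) (p - 1) = 0 := by
  have h := two_mul_harmonicPairSum (recip p) (p - 1)
  rw [harmonicSum_recip (by omega), harmonicSumSq_recip hp] at h
  exact (mul_eq_zero.1 (h.trans (by ring))).resolve_left
    (by exact_mod_cast natCast_ne_zero_of_lt (n := 2) two_pos (by omega))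

theorem harmonicTripleSum_recip (hp : 4 < p) : harmonicTripleSum (recip p) (p - 1) = 0 := by
  have h := six_mul_harmonicTripleSum (recip p) (p - 1)
  rw [harmonicSum_recip (by omega), harmonicSumSq_recip (by omega), harmonicSumCube_recip hp] at h
  refine (mul_eq_zero.1 (h.trans (by ring))).resolve_left ?_
  rw [show (6 : ZMod p) = 2 * 3 by norm_num]
  exact mul_ne_zero (by exact_mod_cast natCast_ne_zero_of_lt (n := 2) two_pos (by omega))
    (by exact_mod_cast natCast_ne_zero_of_lt (n := 3) three_pos (by omega))

theorem sum_range_harmonicSum_recip (hp : 2 < p) :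
    ∑ k ∈ range (p - 1), harmonicSum (recip p) k = 1 := by
  have hΔ : ∑ k ∈ range (p - 1), ((k : ZMod p) + 1) *
      (harmonicSum (recip p) (k + 1) - harmonicSum (recip p) k) = ∑ k ∈ range (p - 1), 1 :=
    sum_congr rfl fun k hk => by
      rw [harmonicSum_succ, add_sub_cancel_left, natCast_add_one_mul_recip (mem_range.1 hk)]
  rw [sum_range_eq_mul_sub_sum, hΔ, harmonicSum_recip hp]
  simp [natCast_sub_one_eq_neg_one]

theorem sum_range_harmonicPairSum_recip (hp : 3 < p) :
    ∑ k ∈ range (p - 1), harmonicPairSum (recip p) k = -1 := by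
  have hΔ : ∑ k ∈ range (p - 1), ((k : ZMod p) + 1) *
      (harmonicPairSum (recip p) (k + 1) - harmonicPairSum (recip p) k)
      = ∑ k ∈ range (p - 1), harmonicSum (recip p) k :=
    sum_congr rfl fun k hk => by
      rw [harmonicPairSum_succ, add_sub_cancel_left]
      linear_combination harmonicSum (recip p) k * natCast_add_one_mul_recip (mem_range.1 hk)
  rw [sum_range_eq_mul_sub_sum, hΔ, harmonicPairSum_recip hp,
    sum_range_harmonicSum_recip (by omega)]
  ring

theorem two_mul_sum_range_mul_harmonicSumSq_recip (hp : 3 < p) :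
    2 * ∑ k ∈ range (p - 1), k * harmonicSumSq (recip p) k = 1 := by
  have hΔ : ∑ k ∈ range (p - 1), ((k : ZMod p) + 1) * k *
      (harmonicSumSq (recip p) (k + 1) - harmonicSumSq (recip p) k)
      = ∑ k ∈ range (p - 1), (1 - recip p k) :=
    sum_congr rfl fun k hk => by
      rw [harmonicSumSq_succ, add_sub_cancel_left]
      linear_combination (k * recip p k + 1) * natCast_add_one_mul_recip (mem_range.1 hk)
  have hH : ∑ k ∈ range (p - 1), recip p k = 0 := harmonicSum_recip (by omega)
  rw [two_mul_sum_range_mul_eq, hΔ, harmonicSumSq_recip hp, sum_sub_distrib, hH]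
  simp [natCast_sub_one_eq_neg_one]

theorem four_mul_sum_range_mul_harmonicSumSq_mul_harmonicSum_recip (hp : 3 < p) :
    4 * ∑ k ∈ range (p - 1), k * (harmonicSumSq (recip p) k * harmonicSum (recip p) k) = -3 := by
  set r := recip p
  have hΔ : ∑ k ∈ range (p - 1), ((k : ZMod p) + 1) * k *
      (harmonicSumSq r (k + 1) * harmonicSum r (k + 1) - harmonicSumSq r k * harmonicSum r k)
      = ∑ k ∈ range (p - 1), (k * harmonicSumSq r k + harmonicSum r k
          - r k * harmonicSum r k + r k - r k ^ 2) :=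
    sum_congr rfl fun k hk => by
      rw [harmonicSumSq_succ, harmonicSum_succ]
      linear_combination (k * (harmonicSumSq r k + r k * harmonicSum r k + r k ^ 2)
        + harmonicSum r k + r k) * natCast_add_one_mul_recip (mem_range.1 hk)
  have hH : ∑ k ∈ range (p - 1), r k = 0 := harmonicSum_recip (by omega)
  have hG : ∑ k ∈ range (p - 1), r k ^ 2 = 0 := harmonicSumSq_recip hp
  have hS : ∑ k ∈ range (p - 1), r k * harmonicSum r k = 0 := harmonicPairSum_recip hp
  have h := two_mul_sum_range_mul_eq (fun k => harmonicSumSq r k * harmonicSum r k) (p - 1)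
  rw [hΔ, harmonicSumSq_recip hp] at h
  have hsumH : ∑ k ∈ range (p - 1), harmonicSum r k = 1 := sum_range_harmonicSum_recip (by omega)
  simp only [sum_add_distrib, sum_sub_distrib, hH, hG, hS, hsumH] at h
  linear_combination 2 * h - two_mul_sum_range_mul_harmonicSumSq_recip hp

theorem eight_mul_weightedSum_recip (hp : 4 < p) :
    8 * weightedSum (recip p) (p - 1 + 1) = 7 + 4 * harmonicPairSumSq (recip p) (p - 1) := by
  set r := recip p
  have hΔ : ∑ k ∈ range (p - 1), ((k : ZMod p) + 1) * k *
      (harmonicSumSq r (k + 1) * harmonicPairSum r (k + 1)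
        - harmonicSumSq r k * harmonicPairSum r k)
      = ∑ k ∈ range (p - 1), (k * (harmonicSumSq r k * harmonicSum r k) + harmonicPairSum r k
          - r k * harmonicPairSum r k + r k * harmonicSum r k - r k ^ 2 * harmonicSum r k) :=
    sum_congr rfl fun k hk => by
      rw [harmonicSumSq_succ, harmonicPairSum_succ]
      linear_combination (k * (harmonicSumSq r k * harmonicSum r k + r k * harmonicPairSum r k
        + r k ^ 2 * harmonicSum r k) + harmonicPairSum r k + r k * harmonicSum r k)
        * natCast_add_one_mul_recip (mem_range.1 hk)
  have hS : ∑ k ∈ range (p - 1), r k * harmonicSum r k = 0 := harmonicPairSum_recip (by omega)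
  have hT : ∑ k ∈ range (p - 1), r k * harmonicPairSum r k = 0 := harmonicTripleSum_recip hp
  have h := two_mul_sum_range_mul_eq (fun k => harmonicSumSq r k * harmonicPairSum r k) (p - 1)
  rw [hΔ, harmonicSumSq_recip (by omega)] at h
  have hsumS : ∑ k ∈ range (p - 1), harmonicPairSum r k = -1 :=
    sum_range_harmonicPairSum_recip (by omega)
  simp only [sum_add_distrib, sum_sub_distrib, hS, hT, hsumS] at h
  have hGH : 4 * ∑ k ∈ range (p - 1), k * (harmonicSumSq r k * harmonicSum r k) = -3 :=
    four_mul_sum_range_mul_harmonicSumSq_mul_harmonicSum_recip (by omega)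
  rw [weightedSum, sum_range_succ, harmonicSumSq_recip (by omega), harmonicPairSumSq]
  linear_combination 4 * h - hGH

end ZModP

section Bernoulli

variable {p : ℕ} [Fact p.Prime]

theorem norm_bernoulli_le_one {n : ℕ} (hn : n < p - 1) : ‖(bernoulli n : ℚ_[p])‖ ≤ 1 := by
  induction n using Nat.strong_induction_on with
  | _ n ih =>
  rcases n with _ | n
  · simp
  have hrec := sum_bernoulli (n + 2)
  rw [if_neg (by omega), sum_range_succ, Nat.choose_succ_self_right] at hrec
  have hB : (bernoulli (n + 1) : ℚ_[p]) = -(((n + 2 : ℕ) : ℚ_[p])⁻¹ *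
      ∑ k ∈ range (n + 1), ((n + 2).choose k : ℚ_[p]) * bernoulli k) := by
    have h := congrArg (Rat.cast : ℚ → ℚ_[p]) hrec
    push_cast at h
    have : ((n : ℚ_[p]) + 2) ≠ 0 := by exact_mod_cast (n + 1).succ_ne_zero
    push_cast
    field_simp
    linear_combination h
  rw [hB, norm_neg]
  refine (PadicInt.subring p).mul_mem ?_ (Subring.sum_mem _ fun k hk => ?_)
  · rw [PadicInt.mem_subring_iff, norm_inv, Padic.norm_natCast_eq_one_iff.2
      (Nat.coprime_of_lt_prime (by omega) (by omega) Fact.out), inv_one]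
  · exact (PadicInt.subring p).mul_mem (natCast_mem _ _)
      (ih k (by simpa using hk) (by simp at hk; omega))

theorem exists_padicInt_eq_bernoulli :
    ∃ b : ℕ → ℤ_[p], ∀ i < p - 1, (b i : ℚ_[p]) = bernoulli i :=
  ⟨fun i => if h : i < p - 1 then ⟨_, norm_bernoulli_le_one h⟩ else 0, fun i hi => by simp [hi]⟩

theorem sum_range_pow_sub_two_eq (b : ℕ → ℤ_[p]) (hb : ∀ i < p - 1, (b i : ℚ_[p]) = bernoulli i)
    (n : ℕ) : ∑ k ∈ range n, (k : ZMod p) ^ (p - 2) = -∑ i ∈ range (p - 1),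
      PadicInt.toZMod (b i) * ((p - 1).choose i : ZMod p) * (n : ZMod p) ^ (p - 1 - i) := by
  have hp := (Fact.out : p.Prime).two_le
  have hfaulhaber := sum_range_pow n (p - 2)
  rw [show p - 2 + 1 = p - 1 by omega, ← Nat.cast_add_one, show p - 2 + 1 = p - 1 by omega]
    at hfaulhaber
  have hint : ((p - 1 : ℕ) : ℤ_[p]) * ∑ k ∈ range n, (k : ℤ_[p]) ^ (p - 2)
      = ∑ i ∈ range (p - 1), b i * ((p - 1).choose i : ℤ_[p]) * (n : ℤ_[p]) ^ (p - 1 - i) := by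
    apply Subtype.ext
    have h := congrArg (Rat.cast : ℚ → ℚ_[p]) hfaulhaber
    have hp1 : ((p - 1 : ℕ) : ℚ_[p]) ≠ 0 := by exact_mod_cast (by omega : p - 1 ≠ 0)
    push_cast at h
    simp only [PadicInt.coe_mul, PadicInt.coe_sum, PadicInt.coe_pow, PadicInt.coe_natCast]
    rw [h, mul_sum]
    refine sum_congr rfl fun i hi => ?_
    rw [hb i (mem_range.1 hi)]
    field_simp
  have h := congrArg PadicInt.toZMod hint
  simp only [map_mul, map_sum, map_pow, map_natCast, natCast_sub_one_eq_neg_one] at h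
  linear_combination -h

theorem inv_eq_pow_sub_two (hp : 2 < p) (x : ZMod p) : x⁻¹ = x ^ (p - 2) := by
  rcases eq_or_ne x 0 with rfl | hx
  · rw [inv_zero, zero_pow (by omega)]
  · refine inv_eq_of_mul_eq_one_right ?_
    rw [← pow_succ', show p - 2 + 1 = p - 1 by omega, ZMod.pow_card_sub_one_eq_one hx]

theorem harmonicSum_recip_eq_sum_pow (hp : 2 < p) (j : ℕ) :
    harmonicSum (recip p) j = ∑ k ∈ range (j + 1), (k : ZMod p) ^ (p - 2) := by
  rw [sum_range_succ', harmonicSum, Nat.cast_zero, zero_pow (by omega), add_zero]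
  exact sum_congr rfl fun k _ => by rw [recip, inv_eq_pow_sub_two hp, Nat.cast_add_one]

theorem sum_recip_sq_mul_pow (hp : 2 < p) {i : ℕ} (hi : i < p - 1) :
    ∑ j ∈ range (p - 1), recip p j ^ 2 * ((j : ZMod p) + 1) ^ (p - 1 - i)
      = if i = p - 3 then -1 else 0 := by
  -- on units `x⁻² = x^(p-3)`, and `p - 1 ∣ 2p - 4 - i` only for `i = p - 3`
  have hunit : ∀ x : ZMod p, x ≠ 0 → x⁻¹ ^ 2 * x ^ (p - 1 - i) = x ^ (2 * p - 4 - i) := by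
    intro x hx
    have h : x ^ (2 * p - 4 - i) * x ^ 2 = x ^ (p - 1 - i) := by
      rw [← pow_add, show 2 * p - 4 - i + 2 = (p - 1) + (p - 1 - i) by omega, pow_add,
        ZMod.pow_card_sub_one_eq_one hx, one_mul]
    rw [← h]
    field_simp
  simp only [recip]
  rw [sum_range_eq_sum_units (fun x => x⁻¹ ^ 2 * x ^ (p - 1 - i))]
  simp only [hunit _ (Units.ne_zero _)]
  rw [FiniteField.sum_pow_units, ZMod.card]
  refine if_congr ⟨fun h => ?_, fun h => ⟨1, by omega⟩⟩ rfl rfl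
  have := Nat.eq_of_dvd_of_lt_two_mul (by omega) h (by omega)
  omega

theorem choose_sub_one_sub_three (hp : 2 < p) : ((p - 1).choose (p - 3) : ZMod p) = 1 := by
  have h := Nat.add_one_mul_choose_eq (p - 2) 1
  rw [show p - 2 + 1 = p - 1 by omega, Nat.choose_one_right] at h
  rw [show p - 3 = p - 1 - 2 by omega, Nat.choose_symm (by omega)]
  have h' := congrArg (Nat.cast : ℕ → ZMod p) h
  push_cast [Nat.cast_sub (by omega : 2 ≤ p), Nat.cast_sub (by omega : 1 ≤ p)] at h'
  rw [ZMod.natCast_self] at h'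
  refine mul_left_cancel₀
    (by exact_mod_cast natCast_ne_zero_of_lt (p := p) (n := 2) two_pos (by omega)) ?_
  linear_combination -h'

theorem harmonicPairSumSq_recip_eq (hp : 2 < p) (b : ℕ → ℤ_[p])
    (hb : ∀ i < p - 1, (b i : ℚ_[p]) = bernoulli i) :
    harmonicPairSumSq (recip p) (p - 1) = PadicInt.toZMod (b (p - 3)) := by
  have hexpand : harmonicPairSumSq (recip p) (p - 1) = -∑ i ∈ range (p - 1),
      PadicInt.toZMod (b i) * ((p - 1).choose i : ZMod p) *
        ∑ j ∈ range (p - 1), recip p j ^ 2 * ((j : ZMod p) + 1) ^ (p - 1 - i) := by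
    simp only [harmonicPairSumSq, harmonicSum_recip_eq_sum_pow hp,
      sum_range_pow_sub_two_eq b hb, mul_neg, sum_neg_distrib, mul_sum, Nat.cast_add_one]
    rw [sum_comm]
    exact congrArg _ (sum_congr rfl fun i _ => sum_congr rfl fun j _ => by ring)
  rw [hexpand, sum_eq_single_of_mem (p - 3) (mem_range.2 (by omega)) fun i hi hne => by
      rw [sum_recip_sq_mul_pow hp (mem_range.1 hi), if_neg hne, mul_zero],
    sum_recip_sq_mul_pow hp (by omega), if_pos rfl, choose_sub_one_sub_three hp]
  ring

end Bernoulli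

section PadicReduction

variable {p : ℕ} [Fact p.Prime]

theorem toZMod_eq_zero_iff {z : ℤ_[p]} : PadicInt.toZMod z = 0 ↔ ‖z‖ < 1 := by
  rw [← RingHom.mem_ker, PadicInt.ker_toZMod, IsLocalRing.mem_maximalIdeal,
    PadicInt.mem_nonunits]

theorem toZMod_inv (z : ℤ_[p]) : PadicInt.toZMod z.inv = (PadicInt.toZMod z)⁻¹ := by
  rcases (PadicInt.norm_le_one z).eq_or_lt with h | h
  · refine (eq_inv_of_mul_eq_one_right ?_)
    rw [← map_mul, PadicInt.mul_inv h, map_one]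
  · rw [toZMod_eq_zero_iff.2 h, inv_zero]
    obtain ⟨k, hk⟩ := z
    have hk1 : ‖k‖ ≠ 1 := h.ne
    simp [PadicInt.inv, hk1]

theorem coe_inv_of_norm_eq_one {z : ℤ_[p]} (h : ‖z‖ = 1) : (z.inv : ℚ_[p]) = (z : ℚ_[p])⁻¹ := by
  refine (eq_inv_of_mul_eq_one_right ?_)
  rw [← PadicInt.coe_mul, PadicInt.mul_inv h, PadicInt.coe_one]

theorem norm_le_inv_of_toZMod_eq_zero {x : ℤ_[p]} (h : PadicInt.toZMod x = 0) :
    ‖(x : ℚ_[p])‖ ≤ (p : ℝ) ^ (-1 : ℤ) := by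
  rw [← PadicInt.norm_def, PadicInt.norm_le_pow_iff_norm_lt_pow_add_one]
  simpa using toZMod_eq_zero_iff.1 h

variable (p) in
noncomputable def padicRecip (i : ℕ) : ℤ_[p] := PadicInt.inv ((i : ℤ_[p]) + 1)

theorem toZMod_comp_padicRecip : PadicInt.toZMod ∘ padicRecip p = recip p :=
  funext fun i => by simp [padicRecip, recip, toZMod_inv]

theorem coe_padicRecip {i : ℕ} (hi : i < p - 1) :
    (padicRecip p i : ℚ_[p]) = ((i : ℚ_[p]) + 1)⁻¹ := by
  have h : ‖((i : ℤ_[p]) + 1)‖ = 1 := by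
    rw [← Nat.cast_add_one, PadicInt.norm_natCast_eq_one_iff]
    exact Nat.coprime_of_lt_prime (by omega) (by omega) Fact.out
  rw [padicRecip, coe_inv_of_norm_eq_one h]
  push_cast
  rfl

end PadicReduction

end HarmonicBernoulli

open HarmonicBernoulli in
theorem stmt_9 (p : ℕ) [hp : Fact p.Prime] (hp3 : 3 < p) :
    ‖((∑ k ∈ Finset.Icc 1 (p - 1), (k : ℚ) *
        ∑ j ∈ Finset.Icc 1 k, ∑ i ∈ Finset.Ico 1 j,
          harmonic' k 2 / ((i : ℚ) * j)
        - (7 / 8 + 1 / 2 * bernoulli (p - 3)) : ℚ) : ℚ_[p])‖ ≤ (p : ℝ) ^ (-1 : ℤ) := by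
  have hp4 : 4 < p := lt_of_le_of_ne hp3 fun h => by subst h; exact absurd hp.out (by norm_num)
  obtain ⟨b, hb⟩ := exists_padicInt_eq_bernoulli (p := p)
  have hred : PadicInt.toZMod
      (8 * weightedSum (padicRecip p) (p - 1 + 1) - 7 - 4 * b (p - 3)) = 0 := by
    simp only [map_sub, map_mul, map_ofNat, map_weightedSum, toZMod_comp_padicRecip,
      eight_mul_weightedSum_recip hp4, harmonicPairSumSq_recip_eq (by omega) b hb]
    ring
  have hcast : ((∑ k ∈ Finset.Icc 1 (p - 1), (k : ℚ) *
        ∑ j ∈ Finset.Icc 1 k, ∑ i ∈ Finset.Ico 1 j,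
          harmonic' k 2 / ((i : ℚ) * j)
        - (7 / 8 + 1 / 2 * bernoulli (p - 3)) : ℚ) : ℚ_[p])
      = 8⁻¹ * PadicInt.Coe.ringHom
          (8 * weightedSum (padicRecip p) (p - 1 + 1) - 7 - 4 * b (p - 3)) := by
    have hbern : PadicInt.Coe.ringHom (b (p - 3)) = bernoulli (p - 3) := hb _ (by omega)
    push_cast [harmonic']
    rw [sum_Icc_eq_weightedSum (PadicInt.Coe.ringHom ∘ padicRecip p) (p - 1)
      fun i hi => coe_padicRecip hi, ← map_weightedSum, map_sub, map_sub, map_mul, map_mul,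
      map_ofNat, map_ofNat, map_ofNat, hbern]
    ring
  have h8 : ‖(8 : ℚ_[p])‖ = 1 := by
    simpa using Padic.norm_natCast_eq_one_iff.2
      (((Nat.coprime_primes hp.out Nat.prime_two).2 (by omega)).pow_right 3)
  rw [hcast, norm_mul, norm_inv, h8, inv_one, one_mul]
  exact norm_le_inv_of_toZMod_eq_zero hred
end

section
/- For any prime p > 3, the sum over k from 0 to p-1 of k times the sum over 1 ≤ i < j ≤ k of 1/(i^2 j^2) is congruent to -(1/2)·B_{p-3} modulo p. -/
/-!
Modulo `p` we have `1 / i ^ 2 ≡ i ^ (p - 3)`. Exchanging the sums over `k` and `j` and using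
`2 ∑_{j ≤ k < p} k ≡ j - j ^ 2`, twice the sum becomes
`∑_{j < p} (j ^ (p - 2) - j ^ (p - 1)) G j` with `G j = ∑_{i < j} i ^ (p - 3)`.
Faulhaber's formula writes `G j` as a polynomial in `j` whose coefficients are Bernoulli numbers,
and for `m ≠ 0` the power sum `∑_{j < p} j ^ m` is `-1` or `0` modulo `p` according as `p - 1 ∣ m`
or not. Only the coefficient of `B_{p-3}` in the first sum survives, and it contributes
`-B_{p-3}`.
-/

open Finset

theorem ZMod.natCast_ne_zero_of_pos_of_lt {p n : ℕ} (h0 : 0 < n) (hn : n < p) :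
    (n : ZMod p) ≠ 0 := by
  rw [Ne, ZMod.natCast_eq_zero_iff]
  exact fun h => h0.ne' (Nat.eq_zero_of_dvd_of_lt h hn)

theorem Finset.sum_Ico_one_eq_sum_range {M : Type*} [AddCommMonoid M] {f : ℕ → M}
    (hf : f 0 = 0) (n : ℕ) : ∑ i ∈ Ico 1 n, f i = ∑ i ∈ range n, f i := by
  rcases n.eq_zero_or_pos with rfl | hn
  · simp
  · rw [sum_range_eq_add_Ico f hn, hf, zero_add]

theorem two_mul_sum_range_natCast {R : Type*} [CommRing R] (n : ℕ) :
    2 * ∑ k ∈ range n, (k : R) = n ^ 2 - n := by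
  induction n with
  | zero => simp
  | succ n ih => rw [sum_range_succ, mul_add, ih]; push_cast; ring

namespace ZMod

variable {p : ℕ} [Fact p.Prime]

theorem two_mul_sum_Ico_natCast {j : ℕ} (hj : j ≤ p) :
    2 * ∑ k ∈ Ico j p, (k : ZMod p) = j - j ^ 2 := by
  rw [sum_Ico_eq_sub _ hj, mul_sub, two_mul_sum_range_natCast, two_mul_sum_range_natCast,
    natCast_self]
  ring

theorem inv_pow_eq_pow_sub {k : ℕ} (hk0 : k ≠ 0) (hk : k < p - 1) (x : ZMod p) :
    (x ^ k)⁻¹ = x ^ (p - 1 - k) := by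
  rcases eq_or_ne x 0 with rfl | hx
  · rw [zero_pow hk0, zero_pow (by omega), inv_zero]
  · refine inv_eq_of_mul_eq_one_right ?_
    rw [← pow_add, Nat.add_sub_cancel' hk.le, pow_card_sub_one_eq_one hx]

theorem sum_range_natCast_s12 {M : Type*} [AddCommMonoid M] (f : ZMod p → M) :
    ∑ j ∈ range p, f j = ∑ x : ZMod p, f x := by
  have : NeZero p := ⟨(Fact.out : p.Prime).ne_zero⟩
  exact sum_nbij' (fun j => (j : ZMod p)) val (fun _ _ => mem_univ _)
    (fun x _ => mem_range.mpr x.val_lt) (fun _ hj => val_cast_of_lt (mem_range.mp hj))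
    (fun x _ => natCast_zmod_val x) (fun _ _ => rfl)

theorem sum_pow {m : ℕ} (hm : m ≠ 0) :
    ∑ x : ZMod p, x ^ m = if p - 1 ∣ m then -1 else 0 := by
  classical
  calc ∑ x : ZMod p, x ^ m = ∑ x : (ZMod p)ˣ, (x ^ m : ZMod p) := by
        rw [Fintype.sum_eq_add_sum_subtype_ne _ 0, zero_pow hm, zero_add]
        exact (Fintype.sum_equiv unitsEquivNeZero _ _ fun _ => rfl).symm
    _ = _ := by rw [FiniteField.sum_pow_units, ZMod.card]

theorem sum_range_natCast_pow {m : ℕ} (hm : m ≠ 0) :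
    ∑ j ∈ range p, (j : ZMod p) ^ m = if p - 1 ∣ m then -1 else 0 := by
  rw [sum_range_natCast_s12 (· ^ m), sum_pow hm]

end ZMod

/-- `x` is `p`-integral and reduces to `a` modulo `p`. The denominator condition matters:
`Rat.cast` into `ZMod p` is not additive on all of `ℚ` (it sends `1 / p` to `0`). -/
def HasResidue (p : ℕ) [Fact p.Prime] (x : ℚ) (a : ZMod p) : Prop :=
  (x.den : ZMod p) ≠ 0 ∧ (x : ZMod p) = a

namespace HasResidue

variable {p : ℕ} [Fact p.Prime] {x y : ℚ} {a b : ZMod p}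

theorem natCast (n : ℕ) : HasResidue p n n := ⟨by simp, Rat.cast_natCast n⟩

theorem add (hx : HasResidue p x a) (hy : HasResidue p y b) : HasResidue p (x + y) (a + b) :=
  ⟨ne_zero_of_dvd_ne_zero (by push_cast; exact mul_ne_zero hx.1 hy.1)
    (Nat.cast_dvd_cast (Rat.add_den_dvd x y)),
    by rw [Rat.cast_add_of_ne_zero hx.1 hy.1, hx.2, hy.2]⟩

theorem mul (hx : HasResidue p x a) (hy : HasResidue p y b) : HasResidue p (x * y) (a * b) :=
  ⟨ne_zero_of_dvd_ne_zero (by push_cast; exact mul_ne_zero hx.1 hy.1)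
    (Nat.cast_dvd_cast (Rat.mul_den_dvd x y)),
    by rw [Rat.cast_mul_of_ne_zero hx.1 hy.1, hx.2, hy.2]⟩

theorem neg (hx : HasResidue p x a) : HasResidue p (-x) (-a) :=
  ⟨by simpa using hx.1, by rw [Rat.cast_neg, hx.2]⟩

theorem sub (hx : HasResidue p x a) (hy : HasResidue p y b) : HasResidue p (x - y) (a - b) := by
  simpa only [sub_eq_add_neg] using hx.add hy.neg

theorem sum {ι : Type*} {s : Finset ι} {f : ι → ℚ} {g : ι → ZMod p}
    (h : ∀ i ∈ s, HasResidue p (f i) (g i)) : HasResidue p (∑ i ∈ s, f i) (∑ i ∈ s, g i) := by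
  induction s using Finset.cons_induction with
  | empty => simpa using natCast (p := p) 0
  | cons i s _ ih =>
    rw [sum_cons, sum_cons]
    exact (h i (mem_cons_self i s)).add (ih fun j hj => h j (mem_cons_of_mem hj))

theorem inv_natCast {n : ℕ} (hn : (n : ZMod p) ≠ 0) :
    HasResidue p (n : ℚ)⁻¹ (n : ZMod p)⁻¹ :=
  ⟨by rwa [Rat.inv_natCast_den, if_neg (by rintro rfl; simp at hn)], Rat.cast_inv_nat n⟩

theorem div_natCast (hx : HasResidue p x a) {n : ℕ} (hn : (n : ZMod p) ≠ 0) :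
    HasResidue p (x / n) (a / n) := by
  simpa only [div_eq_mul_inv] using hx.mul (inv_natCast hn)

theorem norm_le (hx : HasResidue p x 0) : ‖(x : ℚ_[p])‖ ≤ (p : ℝ) ^ (-1 : ℤ) := by
  obtain ⟨hden, hx⟩ := hx
  have hnum : (p : ℤ) ∣ x.num := by
    rw [Rat.cast_def, div_eq_zero_iff, or_iff_left hden] at hx
    exact (ZMod.intCast_zmod_eq_zero_iff_dvd _ _).mp hx
  have hden_norm : ‖(x.den : ℚ_[p])‖ = 1 := by
    rwa [Padic.norm_natCast_eq_one_iff, Nat.Prime.coprime_iff_not_dvd Fact.out,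
      ← ZMod.natCast_eq_zero_iff]
  rw [← Rat.num_div_den x, Rat.cast_div, Rat.cast_intCast, Rat.cast_natCast, norm_div,
    hden_norm, div_one]
  exact (Padic.norm_int_le_pow_iff_dvd x.num 1).mpr (by simpa using hnum)

end HasResidue

theorem hasResidue_bernoulli {p : ℕ} [Fact p.Prime] {m : ℕ} (hm : m + 1 < p) :
    HasResidue p (bernoulli m) (bernoulli m) := by
  induction m using Nat.strong_induction_on with
  | _ m ih =>
    rcases m.eq_zero_or_pos with rfl | hm0
    · simpa using HasResidue.natCast (p := p) 1
    have hrec : bernoulli m =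
        -(∑ k ∈ range m, ((m + 1).choose k : ℚ) * bernoulli k) / ((m + 1 : ℕ) : ℚ) := by
      have h := sum_bernoulli (m + 1)
      rw [if_neg (by omega), sum_range_succ, Nat.choose_succ_self_right] at h
      field_simp
      linear_combination h
    have h := ((HasResidue.sum fun k hk => (HasResidue.natCast ((m + 1).choose k)).mul
      (ih k (mem_range.mp hk) (by grind))).neg).div_natCast
      (ZMod.natCast_ne_zero_of_pos_of_lt (p := p) (Nat.succ_pos m) hm)
    exact ⟨(hrec ▸ h).1, rfl⟩

namespace ZMod

variable {p : ℕ} [Fact p.Prime]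

theorem sum_range_pow {e : ℕ} (he : e + 1 < p) (n : ℕ) :
    ∑ i ∈ range n, (i : ZMod p) ^ e =
      ∑ t ∈ range (e + 1),
        (bernoulli t : ZMod p) * (e + 1).choose t * n ^ (e + 1 - t) / (e + 1) := by
  have h := HasResidue.sum fun t (ht : t ∈ range (e + 1)) =>
    (((hasResidue_bernoulli (p := p) (m := t) (by grind)).mul
      (.natCast ((e + 1).choose t))).mul (.natCast (n ^ (e + 1 - t)))).div_natCast
      (natCast_ne_zero_of_pos_of_lt (Nat.succ_pos e) he)
  have hfaulhaber : ∑ t ∈ range (e + 1), bernoulli t * ((e + 1).choose t : ℚ) *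
      ((n ^ (e + 1 - t) : ℕ) : ℚ) / ((e + 1 : ℕ) : ℚ) = ((∑ i ∈ range n, i ^ e : ℕ) : ℚ) := by
    push_cast
    exact (_root_.sum_range_pow n e).symm
  have hcast := h.2
  rw [hfaulhaber, Rat.cast_natCast] at hcast
  exact_mod_cast hcast

theorem sum_pow_mul_sum_range_pow {e : ℕ} (he : e + 1 < p) (a : ℕ) :
    ∑ j ∈ range p, (j : ZMod p) ^ a * ∑ i ∈ range j, (i : ZMod p) ^ e =
      ∑ t ∈ range (e + 1), (bernoulli t : ZMod p) * (e + 1).choose t / (e + 1) *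
        if p - 1 ∣ a + (e + 1 - t) then -1 else 0 := by
  simp_rw [sum_range_pow he, mul_sum]
  rw [sum_comm]
  refine sum_congr rfl fun t ht => ?_
  rw [← sum_range_natCast_pow (by grind), mul_sum]
  refine sum_congr rfl fun j _ => ?_
  rw [pow_add]
  ring

theorem sum_pow_sub_two_mul_sum_range_pow (hp : 3 < p) :
    ∑ j ∈ range p, (j : ZMod p) ^ (p - 2) * ∑ i ∈ range j, (i : ZMod p) ^ (p - 3) =
      -bernoulli (p - 3) := by
  have he : p - 3 + 1 < p := by omega
  have hunit : ((p - 3 : ℕ) : ZMod p) + 1 ≠ 0 := by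
    exact_mod_cast natCast_ne_zero_of_pos_of_lt (Nat.succ_pos _) he
  rw [sum_pow_mul_sum_range_pow he, sum_eq_single (p - 3)]
  · rw [if_pos (by rw [show p - 2 + (p - 3 + 1 - (p - 3)) = p - 1 by omega]),
      Nat.choose_succ_self_right]
    push_cast
    field_simp
  · intro t ht hne
    rw [if_neg, mul_zero]
    intro hdvd
    have := Nat.eq_of_dvd_of_lt_two_mul (by omega) hdvd (by grind)
    grind
  · exact fun h => absurd (self_mem_range_succ _) h

theorem sum_pow_sub_one_mul_sum_range_pow (hp : 3 < p) :
    ∑ j ∈ range p, (j : ZMod p) ^ (p - 1) * ∑ i ∈ range j, (i : ZMod p) ^ (p - 3) = 0 := by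
  rw [sum_pow_mul_sum_range_pow (by omega)]
  refine sum_eq_zero fun t ht => ?_
  rw [if_neg, mul_zero]
  intro hdvd
  have := Nat.eq_of_dvd_of_lt_two_mul (by omega) hdvd (by grind)
  grind

theorem sum_mul_sum_Icc_sum_Ico (hp : 3 < p) :
    ∑ k ∈ range p, (k : ZMod p) *
        ∑ j ∈ Icc 1 k, ∑ i ∈ Ico 1 j, (i : ZMod p) ^ (p - 3) * (j : ZMod p) ^ (p - 3) =
      -bernoulli (p - 3) / 2 := by
  set G : ℕ → ZMod p := fun j => ∑ i ∈ range j, (i : ZMod p) ^ (p - 3)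
  have hinner (k : ℕ) :
      ∑ j ∈ Icc 1 k, ∑ i ∈ Ico 1 j, (i : ZMod p) ^ (p - 3) * (j : ZMod p) ^ (p - 3) =
        ∑ j ∈ Ico 0 (k + 1), (j : ZMod p) ^ (p - 3) * G j := by
    rw [← Ico_add_one_right_eq_Icc, sum_Ico_one_eq_sum_range (by simp), range_eq_Ico]
    refine sum_congr rfl fun j _ => ?_
    rw [← sum_mul, sum_Ico_one_eq_sum_range (by simp; omega), mul_comm]
  have hswap :
      2 * ∑ k ∈ range p, (k : ZMod p) * ∑ j ∈ Ico 0 (k + 1), (j : ZMod p) ^ (p - 3) * G j =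
        ∑ j ∈ range p, ((j : ZMod p) ^ (p - 2) * G j - (j : ZMod p) ^ (p - 1) * G j) := by
    simp_rw [mul_sum, range_eq_Ico]
    rw [← sum_Ico_Ico_comm]
    refine sum_congr rfl fun j hj => ?_
    rw [← mul_sum, ← sum_mul, ← mul_assoc, two_mul_sum_Ico_natCast (mem_Ico.mp hj).2.le,
      show p - 2 = p - 3 + 1 by omega, show p - 1 = p - 3 + 2 by omega, pow_add, pow_succ]
    ring
  have htwo : (2 : ZMod p) ≠ 0 := by
    exact_mod_cast natCast_ne_zero_of_pos_of_lt (n := 2) two_pos (by omega)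
  simp_rw [hinner]
  rw [eq_div_iff htwo, mul_comm, hswap, sum_sub_distrib,
    sum_pow_sub_two_mul_sum_range_pow hp, sum_pow_sub_one_mul_sum_range_pow hp, sub_zero]

end ZMod

section

variable {p : ℕ} [Fact p.Prime]

theorem hasResidue_one_div_sq_mul_sq (hp : 3 < p) {i j : ℕ} (hi : (i : ZMod p) ≠ 0)
    (hj : (j : ZMod p) ≠ 0) :
    HasResidue p (1 / ((i : ℚ) ^ 2 * (j : ℚ) ^ 2))
      ((i : ZMod p) ^ (p - 3) * (j : ZMod p) ^ (p - 3)) := by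
  convert HasResidue.inv_natCast (p := p) (n := i ^ 2 * j ^ 2)
    (by push_cast; exact mul_ne_zero (pow_ne_zero 2 hi) (pow_ne_zero 2 hj)) using 1
  · push_cast
    rw [one_div]
  · push_cast
    rw [mul_inv, ZMod.inv_pow_eq_pow_sub two_ne_zero (by omega),
      ZMod.inv_pow_eq_pow_sub two_ne_zero (by omega), Nat.sub_sub]

theorem hasResidue_sum_mul_sum_Icc_sum_Ico (hp : 3 < p) :
    HasResidue p
      (∑ k ∈ range p, (k : ℚ) * ∑ j ∈ Icc 1 k, ∑ i ∈ Ico 1 j, 1 / ((i : ℚ) ^ 2 * (j : ℚ) ^ 2))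
      (∑ k ∈ range p, (k : ZMod p) *
        ∑ j ∈ Icc 1 k, ∑ i ∈ Ico 1 j, (i : ZMod p) ^ (p - 3) * (j : ZMod p) ^ (p - 3)) :=
  HasResidue.sum fun k hk => (HasResidue.natCast k).mul <|
    HasResidue.sum fun j hj => HasResidue.sum fun i hi => by
      simp only [mem_range, mem_Icc, mem_Ico] at hk hj hi
      exact hasResidue_one_div_sq_mul_sq hp
        (ZMod.natCast_ne_zero_of_pos_of_lt (by omega) (by omega))
        (ZMod.natCast_ne_zero_of_pos_of_lt (by omega) (by omega))

end

theorem stmt_12 (p : ℕ) [hp : Fact p.Prime] (hp3 : 3 < p) :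
    ‖((∑ k ∈ Finset.range p, (k : ℚ) *
        ∑ j ∈ Finset.Icc 1 k, ∑ i ∈ Finset.Ico 1 j, 1 / ((i : ℚ) ^ 2 * (j : ℚ) ^ 2)
        - (-(1 / 2) * bernoulli (p - 3)) : ℚ) : ℚ_[p])‖ ≤ (p : ℝ) ^ (-1 : ℤ) := by
  have htwo : ((2 : ℕ) : ZMod p) ≠ 0 := ZMod.natCast_ne_zero_of_pos_of_lt two_pos (by omega)
  have hhalf : HasResidue p (-(1 / 2) * bernoulli (p - 3))
      (-(2 : ZMod p)⁻¹ * bernoulli (p - 3)) := by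
    simpa [one_div] using
      (HasResidue.inv_natCast htwo).neg.mul (hasResidue_bernoulli (m := p - 3) (by omega))
  refine HasResidue.norm_le ?_
  convert (hasResidue_sum_mul_sum_Icc_sum_Ico hp3).sub hhalf using 1
  rw [ZMod.sum_mul_sum_Icc_sum_Ico hp3]
  ring
end

section
/- Let r be a positive integer and p a prime with p > 2r+1. Then sum_{k=0}^{p-1} k^r·(1/(p+1) + k)^r·(-1)^k·C(p-1, k) = 0. -/
/-!
Up to the sign `(-1)^(p-1)`, the sum is the `(p-1)`-th forward difference at `0` of the
polynomial `x^r (x + 1/(p+1))^r`. Its degree `2r` is less than `p - 1`, so that difference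
vanishes.
-/

open Finset Polynomial

theorem Polynomial.sum_range_eval_mul_neg_one_pow_mul_choose_eq_zero {R : Type*} [CommRing R]
    {P : R[X]} {n : ℕ} (hP : P.natDegree < n) :
    ∑ k ∈ range (n + 1), P.eval (k : R) * (-1) ^ k * n.choose k = 0 := by
  have h := congr_fun (fwdDiff_iter_eq_zero_of_degree_lt hP) 0
  rw [fwdDiff_iter_eq_sum_shift, Pi.zero_apply] at h
  calc ∑ k ∈ range (n + 1), P.eval (k : R) * (-1) ^ k * n.choose k
      = (-1) ^ n * ∑ k ∈ range (n + 1),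
          ((-1 : ℤ) ^ (n - k) * n.choose k) • P.eval (0 + k • 1) := by
        rw [mul_sum]
        refine sum_congr rfl fun k hk => ?_
        obtain ⟨j, rfl⟩ := Nat.exists_eq_add_of_le (Nat.lt_succ_iff.mp (mem_range.mp hk))
        simp only [Nat.add_sub_cancel_left, zero_add, nsmul_one, zsmul_eq_mul]
        push_cast
        ring_nf
        rw [pow_mul', neg_one_sq, one_pow, mul_one]
    _ = 0 := by rw [h, mul_zero]

theorem stmt_16_general (r p : ℕ) (hpr : 2 * r + 1 < p) :
    ∑ k ∈ Finset.range p,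
        (k : ℚ) ^ r * (1 / ((p : ℚ) + 1) + k) ^ r * (-1 : ℚ) ^ k *
          (Nat.choose (p - 1) k : ℚ) = 0 := by
  obtain ⟨n, rfl⟩ : ∃ n, p = n + 1 := ⟨p - 1, by omega⟩
  have hdeg : (X ^ r * (C (1 / ((n + 1 : ℕ) + 1 : ℚ)) + X) ^ r).natDegree < n :=
    lt_of_le_of_lt (by compute_degree; omega) (by omega : 2 * r < n)
  simpa using sum_range_eval_mul_neg_one_pow_mul_choose_eq_zero hdeg

theorem stmt_16 (r p : ℕ) (hr : 0 < r) (hp : p.Prime) (hpr : 2 * r + 1 < p) :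
    ∑ k ∈ Finset.range p,
        (k : ℚ) ^ r * (1 / ((p : ℚ) + 1) + k) ^ r * (-1 : ℚ) ^ k *
          (Nat.choose (p - 1) k : ℚ) = 0 :=
  stmt_16_general r p hpr
end
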